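/- arXiv:1705.05510 — 6 statements merged into one kernel-verified Lean document; each statement's English description precedes it below -/
import Mathlib

section
/- Let F : 2^U → 2^V be the map induced by a stable matching instance (G = (U,V;E), ≻). If U₂ ⊆ U₁ ⊆ U, then F(U₂) ⊆ F(U₁). Equivalently: for any U₂ ⊆ U₁ ⊆ U, any stable matching M₂ of the restricted instance (G,≻)_{U₂∪V} and any stable matching M₁ of (G,≻)_{U₁∪V}, every vertex of V matched by M₂ is also matched by M₁. -/
open scoped Classical

/-- `M` is a matching with edges inside the edge set `E`:
no two distinct edges of `M` share a left or a right endpoint. -/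
def IsMatching {U V : Type*} (E M : Finset (U × V)) : Prop :=
  M ⊆ E ∧ ∀ e₁ ∈ M, ∀ e₂ ∈ M, (e₁.1 = e₂.1 ∨ e₁.2 = e₂.2) → e₁ = e₂

/-- The edge set of the subgraph `G[U' ∪ V]` induced by deleting
the left vertices outside `U'` (and their incident edges). -/
noncomputable def restrictL {U V : Type*} (E : Finset (U × V)) (U' : Finset U) : Finset (U × V) :=
  E.filter (fun e => e.1 ∈ U')

/-- `(u, v)` is a blocking pair against the matching `M`, with respect to the
edge set `E` and the preference profiles `succU` (for left vertices) and
`succV` (for right vertices):  `(u,v)` is an edge, `u` is unmatched or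
prefers `v` to its partner, and `v` is unmatched or prefers `u` to its partner. -/
def IsBlocking {U V : Type*} (E : Finset (U × V)) (succU : U → V → V → Prop)
    (succV : V → U → U → Prop) (M : Finset (U × V)) (u : U) (v : V) : Prop :=
  (u, v) ∈ E ∧
  ((∀ v', (u, v') ∉ M) ∨ (∃ v', (u, v') ∈ M ∧ succU u v v')) ∧
  ((∀ u', (u', v) ∉ M) ∨ (∃ u', (u', v) ∈ M ∧ succV v u u'))

/-- `M` is a stable matching of the instance with edge set `E` and
preferences `succU`, `succV`. -/
def IsStable {U V : Type*} (E : Finset (U × V)) (succU : U → V → V → Prop)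
    (succV : V → U → U → Prop) (M : Finset (U × V)) : Prop :=
  IsMatching E M ∧ ∀ u v, ¬ IsBlocking E succU succV M u v

/-- The preferences form a stable matching instance on the bipartite graph with
edge set `E`: each `succU u` is a strict linear order on the neighbors of `u`,
and each `succV v` is a strict linear order on the neighbors of `v`. -/
def ValidPrefs {U V : Type*} (E : Finset (U × V)) (succU : U → V → V → Prop)
    (succV : V → U → U → Prop) : Prop :=
  (∀ u v, ¬ succU u v v) ∧
  (∀ u v₁ v₂ v₃, succU u v₁ v₂ → succU u v₂ v₃ → succU u v₁ v₃) ∧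
  (∀ u v₁ v₂, (u, v₁) ∈ E → (u, v₂) ∈ E → v₁ ≠ v₂ → succU u v₁ v₂ ∨ succU u v₂ v₁) ∧
  (∀ v u, ¬ succV v u u) ∧
  (∀ v u₁ u₂ u₃, succV v u₁ u₂ → succV v u₂ u₃ → succV v u₁ u₃) ∧
  (∀ v u₁ u₂, (u₁, v) ∈ E → (u₂, v) ∈ E → u₁ ≠ u₂ → succV v u₁ u₂ ∨ succV v u₂ u₁)

/-- If `U₂ ⊆ U₁ ⊆ U`, then `F(U₂) ⊆ F(U₁)`: every right vertex matched by a
stable matching `M₂` of `(G,≻)_{U₂ ∪ V}` is also matched by any stable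
matching `M₁` of `(G,≻)_{U₁ ∪ V}`. -/
theorem stable_F_monotone {U V : Type*} [Fintype U] [Fintype V]
    (E : Finset (U × V)) (succU : U → V → V → Prop) (succV : V → U → U → Prop)
    (hpref : ValidPrefs E succU succV)
    (U₁ U₂ : Finset U) (hsub : U₂ ⊆ U₁)
    (M₁ M₂ : Finset (U × V))
    (h₁ : IsStable (restrictL E U₁) succU succV M₁)
    (h₂ : IsStable (restrictL E U₂) succU succV M₂) :
    M₂.image Prod.snd ⊆ M₁.image Prod.snd := by
  obtain ⟨hUirr, hUtrans, hUtot, hVirr, hVtrans, hVtot⟩ := hpref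
  obtain ⟨⟨hM1sub, hM1uniq⟩, hM1stab⟩ := h₁
  obtain ⟨⟨hM2sub, hM2uniq⟩, hM2stab⟩ := h₂
  have hM1E : ∀ e ∈ M₁, e ∈ E := fun e he => (Finset.mem_filter.mp (hM1sub he)).1
  have hM1U : ∀ e ∈ M₁, e.1 ∈ U₁ := fun e he => (Finset.mem_filter.mp (hM1sub he)).2
  have hM2E : ∀ e ∈ M₂, e ∈ E := fun e he => (Finset.mem_filter.mp (hM2sub he)).1
  have hM2U : ∀ e ∈ M₂, e.1 ∈ U₂ := fun e he => (Finset.mem_filter.mp (hM2sub he)).2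
  intro v hv
  by_contra hvM1
  obtain ⟨⟨u₀, v₀⟩, he₀, rfl⟩ := Finset.mem_image.mp hv
  have hun : ∀ u, (u, v₀) ∉ M₁ := by
    intro u hu
    exact hvM1 (Finset.mem_image.mpr ⟨(u, v₀), hu, rfl⟩)
  -- the invariant for the alternating path: x = ((u, w), v) with
  -- (u,w) ∈ M₁, (u,v) ∈ M₂, and u prefers w (its M₁ partner) to v (its M₂ partner)
  set R : (U × V) × V → Prop :=
    fun x => x.1 ∈ M₁ ∧ (x.1.1, x.2) ∈ M₂ ∧ succU x.1.1 x.1.2 x.2 with hR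
  -- base case
  have hE0 : (u₀, v₀) ∈ E := hM2E _ he₀
  have hmem0 : (u₀, v₀) ∈ restrictL E U₁ :=
    Finset.mem_filter.mpr ⟨hE0, hsub (hM2U _ he₀)⟩
  have hB0 : ¬((∀ v', (u₀, v') ∉ M₁) ∨ ∃ v', (u₀, v') ∈ M₁ ∧ succU u₀ v₀ v') := by
    intro hB
    exact hM1stab u₀ v₀ ⟨hmem0, hB, Or.inl hun⟩
  push_neg at hB0
  obtain ⟨⟨v₁, hv₁⟩, hnp0⟩ := hB0
  have hne0 : v₁ ≠ v₀ := fun h => hun u₀ (h ▸ hv₁)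
  have hpr0 : succU u₀ v₁ v₀ :=
    (hUtot u₀ v₁ v₀ (hM1E _ hv₁) hE0 hne0).resolve_right (hnp0 v₁ hv₁)
  have hbase : R ((u₀, v₁), v₀) := ⟨hv₁, he₀, hpr0⟩
  -- step lemma
  have step : ∀ x : (U × V) × V, R x → ∃ y : (U × V) × V, R y ∧ y.2 = x.1.2 := by
    rintro ⟨⟨u, w⟩, v⟩ ⟨hM1, hM2, hpr⟩
    have hM2' : (u, v) ∈ M₂ := hM2
    have hE_uw : (u, w) ∈ E := hM1E _ hM1
    have hmem2 : (u, w) ∈ restrictL E U₂ :=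
      Finset.mem_filter.mpr ⟨hE_uw, hM2U (u, v) hM2'⟩
    have hC : ¬((∀ u', (u', w) ∉ M₂) ∨ ∃ u', (u', w) ∈ M₂ ∧ succV w u u') := by
      intro hC
      exact hM2stab u w ⟨hmem2, Or.inr ⟨v, hM2, hpr⟩, hC⟩
    push_neg at hC
    obtain ⟨⟨u', hu'⟩, hnp⟩ := hC
    have hne_uu' : u' ≠ u := by
      rintro rfl
      have heq := hM2uniq _ hu' _ hM2' (Or.inl rfl)
      have hwv : w = v := congrArg Prod.snd heq
      rw [hwv] at hpr
      exact hUirr u' v hpr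
    have hpr' : succV w u' u :=
      (hVtot w u' u (hM2E _ hu') hE_uw hne_uu').resolve_right (hnp u' hu')
    have hmem1 : (u', w) ∈ restrictL E U₁ :=
      Finset.mem_filter.mpr ⟨hM2E _ hu', hsub (hM2U _ hu')⟩
    have hB2 : ¬((∀ v', (u', v') ∉ M₁) ∨ ∃ v', (u', v') ∈ M₁ ∧ succU u' w v') := by
      intro hB
      exact hM1stab u' w ⟨hmem1, hB, Or.inr ⟨u, hM1, hpr'⟩⟩
    push_neg at hB2
    obtain ⟨⟨w', hw'⟩, hnp2⟩ := hB2
    have hne_w : w' ≠ w := by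
      rintro rfl
      exact hne_uu' (congrArg Prod.fst (hM1uniq _ hw' _ hM1 (Or.inr rfl)))
    have hpr2 : succU u' w' w :=
      (hUtot u' w' w (hM1E _ hw') (hM2E _ hu') hne_w).resolve_right (hnp2 w' hw')
    exact ⟨((u', w'), w), ⟨hw', hu', hpr2⟩, rfl⟩
  choose f hf1 hf2 using step
  -- the infinite alternating path
  let g : ℕ → {x : (U × V) × V // R x} := fun n =>
    Nat.rec ⟨((u₀, v₁), v₀), hbase⟩ (fun _ ih => ⟨f ih.1 ih.2, hf1 ih.1 ih.2⟩) n
  let q : ℕ → V := fun n => Nat.casesOn n v₀ (fun m => ((g m).val).1.2)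
  have hq : ∀ n, (g n).val.2 = q n := by
    intro n
    cases n with
    | zero => rfl
    | succ m => exact hf2 (g m).1 (g m).2
  have hlink : ∀ n, ((g n).val.1.1, q n) ∈ M₂ := fun n => hq n ▸ (g n).2.2.1
  have hmatch : ∀ n, ((g n).val.1.1, q (n + 1)) ∈ M₁ := by
    intro n
    have := (g n).2.1
    simpa using this
  have hback : ∀ n m, q (n + 1) = q (m + 1) → q n = q m := by
    intro n m h
    have h1 : (g n).val.1 = (g m).val.1 := hM1uniq _ (g n).2.1 _ (g m).2.1 (Or.inr h)
    have h1' : (g n).val.1.1 = (g m).val.1.1 := congrArg Prod.fst h1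
    have h2 := hM2uniq _ (hlink n) _ (hlink m) (Or.inl h1')
    exact congrArg Prod.snd h2
  have hkey : ∀ a d, q a = q (a + d) → q 0 = q d := by
    intro a
    induction a with
    | zero => intro d h; simpa using h
    | succ a ih =>
        intro d h
        refine ih d (hback a (a + d) ?_)
        rw [show a + d + 1 = a + 1 + d from by omega]
        exact h
  have final : ∀ a b, a < b → q a ≠ q b := by
    intro a b hlt hq'
    have hd : b = a + (b - a) := by omega
    have h0 : q 0 = q (b - a) := hkey a (b - a) (by rw [← hd]; exact hq')
    obtain ⟨k, hk⟩ : ∃ k, b - a = k + 1 := ⟨b - a - 1, by omega⟩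
    rw [hk] at h0
    refine hun ((g k).val.1.1) ?_
    have := hmatch k
    rw [← h0] at this
    exact this
  obtain ⟨a, b, hab, hqab⟩ := Finite.exists_ne_map_eq_of_infinite q
  rcases lt_or_gt_of_ne hab with h | h
  · exact final a b h hqab
  · exact final b a h hqab.symm
end

section
/- Let F : 2^U → 2^V be the map induced by a stable matching instance (G = (U,V;E), ≻). If U₂ ⊆ U₁ ⊆ U and |F(U₁)| = |U₁| (i.e., every vertex of U₁ is matched in a stable matching of the restriction to U₁ ∪ V), then |F(U₂)| = |U₂| (i.e., every vertex of U₂ is matched in a stable matching of the restriction to U₂ ∪ V). -/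
open scoped Classical

/-! ### Auxiliary material -/

private lemma card_image_fst_eq {U V : Type*} [DecidableEq U] (M : Finset (U × V))
    (h : ∀ e₁ ∈ M, ∀ e₂ ∈ M, (e₁.1 = e₂.1 ∨ e₁.2 = e₂.2) → e₁ = e₂) :
    (M.image Prod.fst).card = M.card :=
  Finset.card_image_of_injOn fun a ha b hb hab =>
    h a (Finset.mem_coe.mp ha) b (Finset.mem_coe.mp hb) (Or.inl hab)

private lemma card_image_snd_eq {U V : Type*} [DecidableEq V] (M : Finset (U × V))
    (h : ∀ e₁ ∈ M, ∀ e₂ ∈ M, (e₁.1 = e₂.1 ∨ e₁.2 = e₂.2) → e₁ = e₂) :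
    (M.image Prod.snd).card = M.card :=
  Finset.card_image_of_injOn fun a ha b hb hab =>
    h a (Finset.mem_coe.mp ha) b (Finset.mem_coe.mp hb) (Or.inr hab)

/-- Invariant along the alternating sequence: `p` is an `M₂`-edge whose right
endpoint is matched in `M₁` to a left vertex it likes less than `p.1`. -/
private def StInv {U V : Type*} (M₁ M₂ : Finset (U × V))
    (succV : V → U → U → Prop) (p : U × V) : Prop :=
  p ∈ M₂ ∧ ∃ u', (u', p.2) ∈ M₁ ∧ succV p.2 p.1 u'

/-- The alternating sequence obtained by iterating a step function. -/
private noncomputable def stSeq {U V : Type*} (M₁ M₂ : Finset (U × V))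
    (succV : V → U → U → Prop)
    (init : {p : U × V // StInv M₁ M₂ succV p})
    (step : ∀ p : U × V, StInv M₁ M₂ succV p →
      ∃ q : U × V, StInv M₁ M₂ succV q ∧ (p.1, q.2) ∈ M₁) :
    ℕ → {p : U × V // StInv M₁ M₂ succV p}
  | 0 => init
  | n + 1 =>
    let s := stSeq M₁ M₂ succV init step n
    ⟨Classical.choose (step s.1 s.2), (Classical.choose_spec (step s.1 s.2)).1⟩

private lemma stSeq_link {U V : Type*} (M₁ M₂ : Finset (U × V))
    (succV : V → U → U → Prop)
    (init : {p : U × V // StInv M₁ M₂ succV p})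
    (step : ∀ p : U × V, StInv M₁ M₂ succV p →
      ∃ q : U × V, StInv M₁ M₂ succV q ∧ (p.1, q.2) ∈ M₁) (n : ℕ) :
    ((stSeq M₁ M₂ succV init step n).1.1,
      (stSeq M₁ M₂ succV init step (n + 1)).1.2) ∈ M₁ := by
  have := (Classical.choose_spec (step (stSeq M₁ M₂ succV init step n).1
    (stSeq M₁ M₂ succV init step n).2)).2
  simpa [stSeq] using this

/-- If `U₂ ⊆ U₁ ⊆ U` and `|F(U₁)| = |U₁|` (every vertex of `U₁` is matched in a
stable matching of the restriction to `U₁ ∪ V`), then `|F(U₂)| = |U₂|` (every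
vertex of `U₂` is matched in a stable matching of the restriction to `U₂ ∪ V`). -/
theorem stable_F_card {U V : Type*} [Fintype U] [Fintype V]
    (E : Finset (U × V)) (succU : U → V → V → Prop) (succV : V → U → U → Prop)
    (hpref : ValidPrefs E succU succV)
    (U₁ U₂ : Finset U) (hsub : U₂ ⊆ U₁)
    (M₁ M₂ : Finset (U × V))
    (h₁ : IsStable (restrictL E U₁) succU succV M₁)
    (h₂ : IsStable (restrictL E U₂) succU succV M₂)
    (hfull : (M₁.image Prod.snd).card = U₁.card) :
    (M₂.image Prod.snd).card = U₂.card := by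
  classical
  obtain ⟨⟨hM₁E, hM₁m⟩, hS₁⟩ := h₁
  obtain ⟨⟨hM₂E, hM₂m⟩, hS₂⟩ := h₂
  have hE₁ : ∀ e ∈ M₁, e ∈ E ∧ e.1 ∈ U₁ := fun e he =>
    Finset.mem_filter.mp (hM₁E he)
  have hE₂ : ∀ e ∈ M₂, e ∈ E ∧ e.1 ∈ U₂ := fun e he =>
    Finset.mem_filter.mp (hM₂E he)
  have irrU := hpref.1
  have totU := hpref.2.2.1
  have irrV := hpref.2.2.2.1
  have totV := hpref.2.2.2.2.2
  -- every vertex of U₁ is matched in M₁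
  have himg₁ : M₁.image Prod.fst = U₁ := by
    apply Finset.eq_of_subset_of_card_le
    · intro u hu
      obtain ⟨e, he, rfl⟩ := Finset.mem_image.mp hu
      exact (hE₁ e he).2
    · rw [card_image_fst_eq M₁ hM₁m, ← card_image_snd_eq M₁ hM₁m, hfull]
  have hmatch₁ : ∀ u ∈ U₁, ∃ v, (u, v) ∈ M₁ := by
    intro u hu
    rw [← himg₁] at hu
    obtain ⟨e, he, h⟩ := Finset.mem_image.mp hu
    subst h
    exact ⟨e.2, by simpa using he⟩
  -- the key claim: every vertex of U₂ is matched in M₂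
  have hmain : U₂ ⊆ M₂.image Prod.fst := by
    intro u₀ hu₀
    by_contra hun
    have hu₀un : ∀ v, (u₀, v) ∉ M₂ := fun v hv =>
      hun (Finset.mem_image.mpr ⟨(u₀, v), hv, rfl⟩)
    obtain ⟨w₁, hw₁⟩ := hmatch₁ u₀ (hsub hu₀)
    -- the step lemma
    have step_ex : ∀ p : U × V, StInv M₁ M₂ succV p →
        ∃ q : U × V, StInv M₁ M₂ succV q ∧ (p.1, q.2) ∈ M₁ := by
      rintro ⟨u, v⟩ ⟨hM2uv, u', hu'M1, hpr⟩
      have huU₂ : u ∈ U₂ := (hE₂ _ hM2uv).2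
      have huvE : (u, v) ∈ E := (hE₂ _ hM2uv).1
      -- use stability of M₁ at edge (u, v)
      have hedge₁ : (u, v) ∈ restrictL E U₁ :=
        Finset.mem_filter.mpr ⟨huvE, hsub huU₂⟩
      have hR : (∀ u'', (u'', v) ∉ M₁) ∨ (∃ u'', (u'', v) ∈ M₁ ∧ succV v u u'') :=
        Or.inr ⟨u', hu'M1, hpr⟩
      have hnL : ¬ ((∀ v', (u, v') ∉ M₁) ∨ (∃ v', (u, v') ∈ M₁ ∧ succU u v v')) :=
        fun hL => hS₁ u v ⟨hedge₁, hL, hR⟩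
      push_neg at hnL
      obtain ⟨⟨v', hv'⟩, hnb⟩ := hnL
      have hv'v : v' ≠ v := by
        rintro rfl
        have h := hM₁m _ hv' _ hu'M1 (Or.inr rfl)
        have h' : u = u' := (Prod.ext_iff.mp h).1
        rw [← h'] at hpr
        exact irrV _ _ hpr
      have hv'E : (u, v') ∈ E := (Finset.mem_filter.mp (hM₁E hv')).1
      have hUpref : succU u v' v := by
        rcases totU u v v' huvE hv'E (Ne.symm hv'v) with h | h
        · exact absurd h (hnb v' hv')
        · exact h
      -- use stability of M₂ at edge (u, v')
      have hedge₂ : (u, v') ∈ restrictL E U₂ :=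
        Finset.mem_filter.mpr ⟨hv'E, huU₂⟩
      have hL₂ : (∀ v'', (u, v'') ∉ M₂) ∨ (∃ v'', (u, v'') ∈ M₂ ∧ succU u v' v'') :=
        Or.inr ⟨v, hM2uv, hUpref⟩
      have hnR : ¬ ((∀ u'', (u'', v') ∉ M₂) ∨ (∃ u'', (u'', v') ∈ M₂ ∧ succV v' u u'')) :=
        fun hR₂ => hS₂ u v' ⟨hedge₂, hL₂, hR₂⟩
      push_neg at hnR
      obtain ⟨⟨up, hup⟩, hnb₂⟩ := hnR
      have hne : up ≠ u := by
        rintro rfl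
        have h := hM₂m _ hup _ hM2uv (Or.inl rfl)
        exact hv'v ((Prod.ext_iff.mp h).2)
      have hupE : (up, v') ∈ E := (hE₂ _ hup).1
      have hVpref : succV v' up u := by
        rcases totV v' up u hupE hv'E hne with h | h
        · exact h
        · exact absurd h (hnb₂ up hup)
      exact ⟨(up, v'), ⟨hup, u, hv', hVpref⟩, hv'⟩
    -- the initial state
    have hw₁E : (u₀, w₁) ∈ E := (Finset.mem_filter.mp (hM₁E hw₁)).1
    have hw₁edge : (u₀, w₁) ∈ restrictL E U₂ := Finset.mem_filter.mpr ⟨hw₁E, hu₀⟩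
    have hnR₀ : ¬ ((∀ u'', (u'', w₁) ∉ M₂) ∨ (∃ u'', (u'', w₁) ∈ M₂ ∧ succV w₁ u₀ u'')) :=
      fun hR => hS₂ u₀ w₁ ⟨hw₁edge, Or.inl hu₀un, hR⟩
    push_neg at hnR₀
    obtain ⟨⟨u₁, hu₁⟩, hnb₀⟩ := hnR₀
    have hne₀ : u₁ ≠ u₀ := fun h => hu₀un w₁ (h ▸ hu₁)
    have hVpref₀ : succV w₁ u₁ u₀ := by
      rcases totV w₁ u₁ u₀ (hE₂ _ hu₁).1 hw₁E hne₀ with h | h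
      · exact h
      · exact absurd h (hnb₀ u₁ hu₁)
    have hInv₀ : StInv M₁ M₂ succV (u₁, w₁) := ⟨hu₁, u₀, hw₁, hVpref₀⟩
    -- the alternating sequence
    set seq : ℕ → {p : U × V // StInv M₁ M₂ succV p} :=
      stSeq M₁ M₂ succV ⟨(u₁, w₁), hInv₀⟩ step_ex with hseqdef
    have hseqM₂ : ∀ n, (seq n).1 ∈ M₂ := fun n => (seq n).2.1
    have hlink : ∀ n, ((seq n).1.1, (seq (n + 1)).1.2) ∈ M₁ := fun n =>
      stSeq_link M₁ M₂ succV ⟨(u₁, w₁), hInv₀⟩ step_ex n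
    have hseq0 : (seq 0).1.2 = w₁ := by rw [hseqdef]; rfl
    have hlink0 : (u₀, (seq 0).1.2) ∈ M₁ := by rw [hseq0]; exact hw₁
    -- injectivity of the sequence of right endpoints
    have key : ∀ n, ∀ d, (seq (n + d)).1.2 = (seq n).1.2 → d = 0 := by
      intro n
      induction n with
      | zero =>
        rintro (_ | m) h
        · rfl
        · exfalso
          rw [show 0 + (m + 1) = m + 1 by omega] at h
          have h2 := hM₁m _ (hlink m) _ hlink0 (Or.inr h)
          have h3 : (seq m).1.1 = u₀ := (Prod.ext_iff.mp h2).1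
          have hm := hseqM₂ m
          rw [show (seq m).1 = ((seq m).1.1, (seq m).1.2) from rfl, h3] at hm
          exact hu₀un _ hm
      | succ k ih =>
        rintro (_ | m) h
        · rfl
        · exfalso
          rw [show k + 1 + (m + 1) = (k + (m + 1)) + 1 by omega] at h
          have h2 := hM₁m _ (hlink (k + (m + 1))) _ (hlink k) (Or.inr h)
          have h3 : (seq (k + (m + 1))).1.1 = (seq k).1.1 := (Prod.ext_iff.mp h2).1
          have h4 := hM₂m _ (hseqM₂ (k + (m + 1))) _ (hseqM₂ k) (Or.inl h3)
          have h5 : (seq (k + (m + 1))).1.2 = (seq k).1.2 := (Prod.ext_iff.mp h4).2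
          exact Nat.succ_ne_zero m (ih (m + 1) h5)
    have hinj : Function.Injective (fun n => (seq n).1.2) := by
      intro a b hab
      rcases le_total a b with hle | hle
      · obtain ⟨d, rfl⟩ := Nat.exists_eq_add_of_le hle
        have := key a d (by simpa using hab.symm)
        omega
      · obtain ⟨d, rfl⟩ := Nat.exists_eq_add_of_le hle
        have := key b d (by simpa using hab)
        omega
    haveI : Finite ℕ := Finite.of_injective _ hinj
    exact not_finite ℕ
  -- finish the cardinality computation
  have himg₂ : M₂.image Prod.fst = U₂ :=
    Finset.Subset.antisymm
      (fun u hu => by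
        obtain ⟨e, he, rfl⟩ := Finset.mem_image.mp hu
        exact (hE₂ e he).2)
      hmain
  rw [card_image_snd_eq M₂ hM₂m, ← card_image_fst_eq M₂ hM₂m, himg₂]
end

section
/- Let F : 2^U → 2^V be the map induced by a weighted matching instance (G = (U,V;E), w) in which all matchings have pairwise distinct weights. If U₂ ⊆ U₁ ⊆ U, then F(U₂) ⊆ F(U₁); that is, every vertex of V matched by the unique maximum-weight matching of G[U₂ ∪ V] is also matched by the unique maximum-weight matching of G[U₁ ∪ V]. -/
open scoped Classical

/-- The weight of a matching: the sum of the weights of its edges. -/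
noncomputable def mWeight {U V : Type*} (w : U × V → ℝ) (M : Finset (U × V)) : ℝ :=
  ∑ e ∈ M, w e

/-- `M` is a maximum-weight matching of the graph with edge set `E`. -/
def IsMaxMatching {U V : Type*} (E : Finset (U × V)) (w : U × V → ℝ)
    (M : Finset (U × V)) : Prop :=
  IsMatching E M ∧ ∀ M' : Finset (U × V), IsMatching E M' → mWeight w M' ≤ mWeight w M

/-- All matchings of the graph with edge set `E` have pairwise distinct weights. -/
def DistinctWeights {U V : Type*} (E : Finset (U × V)) (w : U × V → ℝ) : Prop :=
  ∀ M₁ M₂ : Finset (U × V), IsMatching E M₁ → IsMatching E M₂ → M₁ ≠ M₂ →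
    mWeight w M₁ ≠ mWeight w M₂

/-- One step of the alternating walk in the symmetric difference `M₁ Δ M₂`:
from an `M₂`-only edge we continue through its left endpoint along an
`M₁`-only edge, and from an `M₁`-only edge we continue through its right
endpoint along an `M₂`-only edge. -/
def AltStep {U V : Type*} (M₁ M₂ : Finset (U × V)) (e f : U × V) : Prop :=
  (e ∈ M₂ ∧ e ∉ M₁ ∧ f ∈ M₁ ∧ f ∉ M₂ ∧ f.1 = e.1) ∨
  (e ∈ M₁ ∧ e ∉ M₂ ∧ f ∈ M₂ ∧ f ∉ M₁ ∧ f.2 = e.2)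

/-- If `U₂ ⊆ U₁ ⊆ U`, then `F(U₂) ⊆ F(U₁)`: every right vertex matched by the
unique maximum-weight matching of `G[U₂ ∪ V]` is also matched by the unique
maximum-weight matching of `G[U₁ ∪ V]`. -/
theorem mm_F_monotone {U V : Type*} [Fintype U] [Fintype V]
    (E : Finset (U × V)) (w : U × V → ℝ)
    (hdist : DistinctWeights E w)
    (U₁ U₂ : Finset U) (hsub : U₂ ⊆ U₁)
    (M₁ M₂ : Finset (U × V))
    (h₁ : IsMaxMatching (restrictL E U₁) w M₁)
    (h₂ : IsMaxMatching (restrictL E U₂) w M₂) :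
    M₂.image Prod.snd ⊆ M₁.image Prod.snd := by
  intro v hv
  by_contra hvM₁
  obtain ⟨ev, hevM₂, hev2⟩ := Finset.mem_image.mp hv
  have hvnot : ∀ f ∈ M₁, f.2 ≠ v := by
    intro f hf hfv
    exact hvM₁ (Finset.mem_image.mpr ⟨f, hf, hfv⟩)
  have hevM₁ : ev ∉ M₁ := fun h => hvnot ev h hev2
  -- basic facts about the two matchings
  have hm₁ := h₁.1.2
  have hm₂ := h₂.1.2
  have hM₁E : M₁ ⊆ E := h₁.1.1.trans (Finset.filter_subset _ _)
  have hM₂E : M₂ ⊆ E := h₂.1.1.trans (Finset.filter_subset _ _)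
  have hM₂U₂ : ∀ f ∈ M₂, f.1 ∈ U₂ := fun f hf => (Finset.mem_filter.mp (h₂.1.1 hf)).2
  have hr12 : restrictL E U₂ ⊆ restrictL E U₁ := by
    intro e he
    rw [restrictL, Finset.mem_filter] at he ⊢
    exact ⟨he.1, hsub he.2⟩
  -- the alternating component of `v`
  set R : U × V → Prop := Relation.ReflTransGen (AltStep M₁ M₂) ev with hRdef
  set C : Finset (U × V) := (M₁ ∪ M₂).filter R with hCdef
  have hevC : ev ∈ C := by
    rw [hCdef, Finset.mem_filter]
    exact ⟨Finset.mem_union_right _ hevM₂, Relation.ReflTransGen.refl⟩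
  have reach_cases : ∀ f, R f → f = ev ∨
      (f ∈ M₁ ∧ f ∉ M₂ ∧ ∃ g, R g ∧ g ∈ M₂ ∧ g ∉ M₁ ∧ f.1 = g.1) ∨
      (f ∈ M₂ ∧ f ∉ M₁ ∧ ∃ g, R g ∧ g ∈ M₁ ∧ g ∉ M₂ ∧ f.2 = g.2) := by
    intro f hf
    rw [hRdef] at hf
    induction hf with
    | refl => exact Or.inl rfl
    | @tail b c hb hstep ih =>
      rcases hstep with ⟨h1, h2, h3, h4, h5⟩ | ⟨h1, h2, h3, h4, h5⟩
      · exact Or.inr (Or.inl ⟨h3, h4, b, hb, h1, h2, h5⟩)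
      · exact Or.inr (Or.inr ⟨h3, h4, b, hb, h1, h2, h5⟩)
  have hC1 : ∀ f ∈ C, f ∈ M₁ → f ∉ M₂ ∧ ∃ g ∈ C, g ∈ M₂ ∧ f.1 = g.1 := by
    intro f hfC hfM₁
    have hRf : R f := (Finset.mem_filter.mp hfC).2
    rcases reach_cases f hRf with h | ⟨_, h2, g, hRg, hg2, _, h5⟩ | ⟨_, h2, _⟩
    · exact absurd (h ▸ hfM₁) hevM₁
    · exact ⟨h2, g, Finset.mem_filter.mpr ⟨Finset.mem_union_right _ hg2, hRg⟩, hg2, h5⟩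
    · exact absurd hfM₁ h2
  have hC2 : ∀ f ∈ C, f ∈ M₂ → f ∉ M₁ ∧ (f = ev ∨ ∃ g ∈ C, g ∈ M₁ ∧ f.2 = g.2) := by
    intro f hfC hfM₂
    have hRf : R f := (Finset.mem_filter.mp hfC).2
    rcases reach_cases f hRf with h | ⟨h1, h2, _⟩ | ⟨_, h2, g, hRg, hg1, _, h5⟩
    · subst h; exact ⟨hevM₁, Or.inl rfl⟩
    · exact absurd hfM₂ h2
    · exact ⟨h2, Or.inr ⟨g, Finset.mem_filter.mpr ⟨Finset.mem_union_left _ hg1, hRg⟩, hg1, h5⟩⟩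
  -- closure of the component
  have closure1 : ∀ g ∈ M₁, g ∉ C → ∀ f ∈ C, f ∈ M₂ →
      (g.1 = f.1 ∨ g.2 = f.2) → False := by
    intro g hgM₁ hgC f hfC hfM₂ hsh
    obtain ⟨hfM₁, hcase⟩ := hC2 f hfC hfM₂
    rcases hsh with h | h
    · have hgM₂ : g ∉ M₂ := by
        intro hgM₂
        have := hm₂ g hgM₂ f hfM₂ (Or.inl h)
        exact hgC (this ▸ hfC)
      have hstep : AltStep M₁ M₂ f g := Or.inl ⟨hfM₂, hfM₁, hgM₁, hgM₂, h⟩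
      have hRg : R g := ((Finset.mem_filter.mp hfC).2).tail hstep
      exact hgC (Finset.mem_filter.mpr ⟨Finset.mem_union_left _ hgM₁, hRg⟩)
    · rcases hcase with rfl | ⟨h', hh'C, hh'M₁, heq⟩
      · exact hvnot g hgM₁ (h.trans hev2)
      · have := hm₁ g hgM₁ h' hh'M₁ (Or.inr (h.trans heq))
        exact hgC (this ▸ hh'C)
  have closure2 : ∀ g ∈ M₂, g ∉ C → ∀ f ∈ C, f ∈ M₁ →
      (g.1 = f.1 ∨ g.2 = f.2) → False := by
    intro g hgM₂ hgC f hfC hfM₁ hsh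
    obtain ⟨hfM₂, h', hh'C, hh'M₂, heq⟩ := hC1 f hfC hfM₁
    rcases hsh with h | h
    · have := hm₂ g hgM₂ h' hh'M₂ (Or.inl (h.trans heq))
      exact hgC (this ▸ hh'C)
    · have hgM₁ : g ∉ M₁ := by
        intro hgM₁
        have := hm₁ g hgM₁ f hfM₁ (Or.inr h)
        exact hfM₂ (this ▸ hgM₂)
      have hstep : AltStep M₁ M₂ f g := Or.inr ⟨hfM₁, hfM₂, hgM₂, hgM₁, h⟩
      have hRg : R g := ((Finset.mem_filter.mp hfC).2).tail hstep
      exact hgC (Finset.mem_filter.mpr ⟨Finset.mem_union_right _ hgM₂, hRg⟩)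
  -- the two swapped matchings
  set N₁ : Finset (U × V) := (M₁ \ C) ∪ (M₂ ∩ C) with hN₁def
  set N₂ : Finset (U × V) := (M₂ \ C) ∪ (M₁ ∩ C) with hN₂def
  have hN₁m : IsMatching (restrictL E U₁) N₁ := by
    constructor
    · intro e he
      rcases Finset.mem_union.mp he with h | h
      · exact h₁.1.1 (Finset.mem_sdiff.mp h).1
      · exact hr12 (h₂.1.1 (Finset.mem_inter.mp h).1)
    · intro e₁ he₁ e₂ he₂ hsh
      rcases Finset.mem_union.mp he₁ with h1 | h1 <;>
        rcases Finset.mem_union.mp he₂ with h2 | h2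
      · exact hm₁ e₁ (Finset.mem_sdiff.mp h1).1 e₂ (Finset.mem_sdiff.mp h2).1 hsh
      · exact absurd (closure1 e₁ (Finset.mem_sdiff.mp h1).1 (Finset.mem_sdiff.mp h1).2
          e₂ (Finset.mem_inter.mp h2).2 (Finset.mem_inter.mp h2).1 hsh) not_false
      · exact absurd (closure1 e₂ (Finset.mem_sdiff.mp h2).1 (Finset.mem_sdiff.mp h2).2
          e₁ (Finset.mem_inter.mp h1).2 (Finset.mem_inter.mp h1).1
          (hsh.imp Eq.symm Eq.symm)) not_false
      · exact hm₂ e₁ (Finset.mem_inter.mp h1).1 e₂ (Finset.mem_inter.mp h2).1 hsh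
  have hN₂m : IsMatching (restrictL E U₂) N₂ := by
    constructor
    · intro e he
      rcases Finset.mem_union.mp he with h | h
      · exact h₂.1.1 (Finset.mem_sdiff.mp h).1
      · obtain ⟨heM₁, heC⟩ := Finset.mem_inter.mp h
        obtain ⟨_, g, hgC, hgM₂, heq⟩ := hC1 e heC heM₁
        rw [restrictL, Finset.mem_filter]
        exact ⟨hM₁E heM₁, heq ▸ hM₂U₂ g hgM₂⟩
    · intro e₁ he₁ e₂ he₂ hsh
      rcases Finset.mem_union.mp he₁ with h1 | h1 <;>
        rcases Finset.mem_union.mp he₂ with h2 | h2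
      · exact hm₂ e₁ (Finset.mem_sdiff.mp h1).1 e₂ (Finset.mem_sdiff.mp h2).1 hsh
      · exact absurd (closure2 e₁ (Finset.mem_sdiff.mp h1).1 (Finset.mem_sdiff.mp h1).2
          e₂ (Finset.mem_inter.mp h2).2 (Finset.mem_inter.mp h2).1 hsh) not_false
      · exact absurd (closure2 e₂ (Finset.mem_sdiff.mp h2).1 (Finset.mem_sdiff.mp h2).2
          e₁ (Finset.mem_inter.mp h1).2 (Finset.mem_inter.mp h1).1
          (hsh.imp Eq.symm Eq.symm)) not_false
      · exact hm₁ e₁ (Finset.mem_inter.mp h1).1 e₂ (Finset.mem_inter.mp h2).1 hsh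
  -- weight computations
  have hd₁ : Disjoint (M₁ \ C) (M₂ ∩ C) := by
    rw [Finset.disjoint_left]
    intro a ha ha'
    exact (Finset.mem_sdiff.mp ha).2 (Finset.mem_inter.mp ha').2
  have hd₂ : Disjoint (M₂ \ C) (M₁ ∩ C) := by
    rw [Finset.disjoint_left]
    intro a ha ha'
    exact (Finset.mem_sdiff.mp ha).2 (Finset.mem_inter.mp ha').2
  have hwN₁ : mWeight w N₁ = mWeight w (M₁ \ C) + mWeight w (M₂ ∩ C) :=
    Finset.sum_union hd₁
  have hwN₂ : mWeight w N₂ = mWeight w (M₂ \ C) + mWeight w (M₁ ∩ C) :=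
    Finset.sum_union hd₂
  have hwM₁ : mWeight w (M₁ ∩ C) + mWeight w (M₁ \ C) = mWeight w M₁ :=
    Finset.sum_inter_add_sum_sdiff M₁ C w
  have hwM₂ : mWeight w (M₂ ∩ C) + mWeight w (M₂ \ C) = mWeight w M₂ :=
    Finset.sum_inter_add_sum_sdiff M₂ C w
  -- strict inequalities from optimality and distinctness of weights
  have hEN₁ : IsMatching E N₁ := ⟨hN₁m.1.trans (Finset.filter_subset _ _), hN₁m.2⟩
  have hEN₂ : IsMatching E N₂ := ⟨hN₂m.1.trans (Finset.filter_subset _ _), hN₂m.2⟩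
  have hEM₁ : IsMatching E M₁ := ⟨hM₁E, hm₁⟩
  have hEM₂ : IsMatching E M₂ := ⟨hM₂E, hm₂⟩
  have hne₁ : N₁ ≠ M₁ := by
    intro h
    have : ev ∈ N₁ := Finset.mem_union_right _ (Finset.mem_inter.mpr ⟨hevM₂, hevC⟩)
    exact hevM₁ (h ▸ this)
  have hne₂ : N₂ ≠ M₂ := by
    intro h
    have : ev ∉ N₂ := by
      intro hev'
      rcases Finset.mem_union.mp hev' with h' | h'
      · exact (Finset.mem_sdiff.mp h').2 hevC
      · exact hevM₁ (Finset.mem_inter.mp h').1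
    exact this (h ▸ hevM₂)
  have hlt₁ : mWeight w N₁ < mWeight w M₁ :=
    lt_of_le_of_ne (h₁.2 N₁ hN₁m) (hdist N₁ M₁ hEN₁ hEM₁ hne₁)
  have hlt₂ : mWeight w N₂ < mWeight w M₂ :=
    lt_of_le_of_ne (h₂.2 N₂ hN₂m) (hdist N₂ M₂ hEN₂ hEM₂ hne₂)
  linarith
end

section
/- Let F : 2^U → 2^V be the map induced by a stable matching instance (G = (U,V;E), ≻), and let 𝓕 := { F(U') : U' ⊆ U }. Then the set system (V, 𝓕) is an antimatroid: ∅ ∈ 𝓕; for every nonempty X ∈ 𝓕 there exists v ∈ X with X∖{v} ∈ 𝓕; and for all X, Y ∈ 𝓕 one has X ∪ Y ∈ 𝓕. -/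
open scoped Classical

/-- The codomain `{ F(U') : U' ⊆ U }` of the map `F` induced by the stable
matching instance: the family of all sets of right vertices matched by a stable
matching of a restricted instance `(G, ≻)_{U' ∪ V}`.  (By the rural hospitals
theorem all stable matchings of a given restriction match the same set of
right vertices, so this is exactly the codomain of `F`.) -/
def stableFamily {U V : Type*} (E : Finset (U × V)) (succU : U → V → V → Prop)
    (succV : V → U → U → Prop) : Set (Finset V) :=
  {X | ∃ (U' : Finset U) (M : Finset (U × V)),
    IsStable (restrictL E U') succU succV M ∧ X = M.image Prod.snd}

/-- Auxiliary: `M` is a matching inside `E` with no blocking pair whose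
left vertex is matched in `M`. -/
def Good {U V : Type*} (E : Finset (U × V)) (succU : U → V → V → Prop)
    (succV : V → U → U → Prop) (M : Finset (U × V)) : Prop :=
  M ⊆ E ∧
  (∀ e₁ ∈ M, ∀ e₂ ∈ M, (e₁.1 = e₂.1 ∨ e₁.2 = e₂.2) → e₁ = e₂) ∧
  ∀ u w v, (u, w) ∈ M → (u, v) ∈ E → succU u v w →
    ∃ u', (u', v) ∈ M ∧ ¬ succV v u u'

lemma mem_family_iff_good {U V : Type*} (E : Finset (U × V)) (succU : U → V → V → Prop)
    (succV : V → U → U → Prop) (X : Finset V) :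
    X ∈ stableFamily E succU succV ↔
      ∃ M, Good E succU succV M ∧ X = M.image Prod.snd := by
  constructor
  · rintro ⟨U', M, ⟨⟨hsub, hmat⟩, hnb⟩, rfl⟩
    refine ⟨M, ⟨fun e he => (Finset.mem_filter.mp (hsub he)).1, hmat, ?_⟩, rfl⟩
    intro u w v huw hE hsucc
    have huU' : u ∈ U' := by
      have := Finset.mem_filter.mp (hsub huw)
      exact this.2
    have hEr : (u, v) ∈ restrictL E U' := Finset.mem_filter.mpr ⟨hE, huU'⟩
    by_contra hcon
    push_neg at hcon
    apply hnb u v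
    refine ⟨hEr, Or.inr ⟨w, huw, hsucc⟩, ?_⟩
    by_cases hvm : ∃ u', (u', v) ∈ M
    · obtain ⟨u', hu'⟩ := hvm
      exact Or.inr ⟨u', hu', hcon u' hu'⟩
    · push_neg at hvm
      exact Or.inl hvm
  · rintro ⟨M, ⟨hsub, hmat, hst⟩, rfl⟩
    refine ⟨M.image Prod.fst, M, ⟨⟨?_, hmat⟩, ?_⟩, rfl⟩
    · intro e he
      exact Finset.mem_filter.mpr ⟨hsub he, Finset.mem_image_of_mem _ he⟩
    · rintro u v ⟨hEr, hu, hv⟩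
      obtain ⟨hE, huim⟩ := Finset.mem_filter.mp hEr
      obtain ⟨⟨a, b⟩, heM, he1⟩ := Finset.mem_image.mp huim
      have he1' : u = a := he1.symm
      subst he1'
      obtain ⟨w, hw⟩ : ∃ w, (u, w) ∈ M := ⟨b, heM⟩
      rcases hu with hu | ⟨v', hv', hsucc⟩
      · exact hu w hw
      · obtain ⟨u₀, hu₀, hnp⟩ := hst u v' v hv' hE hsucc
        rcases hv with hv | ⟨u'', hu'', hp⟩
        · exact hv u₀ hu₀
        · have : u'' = u₀ := by
            have := hmat (u'', v) hu'' (u₀, v) hu₀ (Or.inr rfl)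
            exact congrArg Prod.fst this
          exact hnp (this ▸ hp)

lemma matching_fst_eq {U V : Type*} {M : Finset (U × V)}
    (hmat : ∀ e₁ ∈ M, ∀ e₂ ∈ M, (e₁.1 = e₂.1 ∨ e₁.2 = e₂.2) → e₁ = e₂)
    {u : U} {v v' : V} (h : (u, v) ∈ M) (h' : (u, v') ∈ M) : v = v' :=
  congrArg Prod.snd (hmat (u, v) h (u, v') h' (Or.inl rfl))

lemma matching_snd_eq {U V : Type*} {M : Finset (U × V)}
    (hmat : ∀ e₁ ∈ M, ∀ e₂ ∈ M, (e₁.1 = e₂.1 ∨ e₁.2 = e₂.2) → e₁ = e₂)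
    {u u' : U} {v : V} (h : (u, v) ∈ M) (h' : (u', v) ∈ M) : u = u' :=
  congrArg Prod.fst (hmat (u, v) h (u', v) h' (Or.inr rfl))

lemma exists_maximal_rel {α : Type*} [Fintype α] (r : α → α → Prop)
    (hirr : ∀ a, ¬ r a a) (htr : ∀ a b c, r a b → r b c → r a c)
    {s : Finset α} (hs : s.Nonempty) : ∃ m ∈ s, ∀ x ∈ s, ¬ r x m := by
  obtain ⟨m, hm, hmax⟩ :=
    s.exists_max_image (fun a => (Finset.univ.filter (fun y => r a y)).card) hs
  refine ⟨m, hm, fun x hx hrel => ?_⟩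
  have h1 : Finset.univ.filter (fun y => r m y) ⊆ Finset.univ.filter (fun y => r x y) := by
    intro y hy
    simp only [Finset.mem_filter, Finset.mem_univ, true_and] at hy ⊢
    exact htr x m y hrel hy
  have h2 : Finset.univ.filter (fun y => r m y) ⊂ Finset.univ.filter (fun y => r x y) := by
    refine (Finset.ssubset_iff_of_subset h1).mpr ⟨m, ?_, ?_⟩
    · simp only [Finset.mem_filter, Finset.mem_univ, true_and]; exact hrel
    · simp only [Finset.mem_filter, Finset.mem_univ, true_and]; exact hirr m
  have := Finset.card_lt_card h2
  have := hmax x hx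
  omega

lemma image_snd_erase {U V : Type*} {M : Finset (U × V)}
    (hmat : ∀ e₁ ∈ M, ∀ e₂ ∈ M, (e₁.1 = e₂.1 ∨ e₁.2 = e₂.2) → e₁ = e₂)
    {u : U} {v : V} (huv : (u, v) ∈ M) :
    (M.erase (u, v)).image Prod.snd = (M.image Prod.snd).erase v := by
  ext w
  simp only [Finset.mem_image, Finset.mem_erase]
  constructor
  · rintro ⟨⟨a, b⟩, ⟨hne, hab'⟩, rfl⟩
    refine ⟨fun hbv => hne ?_, ⟨(a, b), hab', rfl⟩⟩
    have hbv' : b = v := hbv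
    have : a = u := matching_snd_eq hmat (hbv' ▸ hab') huv
    simp [this, hbv']
  · rintro ⟨hne, ⟨a, b⟩, hab, rfl⟩
    refine ⟨(a, b), ⟨fun h => hne (congrArg Prod.snd h), hab⟩, rfl⟩

noncomputable def chainMeasure {U V : Type*} [Fintype V] (E : Finset (U × V))
    (succU : U → V → V → Prop) (N : Finset (U × V)) : ℕ :=
  Finset.sum N (fun e => (Finset.univ.filter (fun v => (e.1, v) ∈ E ∧ succU e.1 v e.2)).card)

lemma chain_finish {U V : Type*} (E : Finset (U × V)) (succU : U → V → V → Prop)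
    (succV : V → U → U → Prop) (hpref : ValidPrefs E succU succV)
    {M N : Finset (U × V)} {f : V} {X : Finset V}
    (hM : Good E succU succV M) (hX : X = M.image Prod.snd)
    (hsub : N ⊆ E)
    (hmat : ∀ e₁ ∈ N, ∀ e₂ ∈ N, (e₁.1 = e₂.1 ∨ e₁.2 = e₂.2) → e₁ = e₂)
    (hNim : N.image Prod.snd = X.erase f)
    (hiv : ∀ u w v u', (u, w) ∈ N → (u', v) ∈ N → (u, v) ∈ E → succU u v w → ¬ succV v u u')
    (hv : ∀ u w, (u, w) ∈ N → ∃ w₀, (u, w₀) ∈ M ∧ (w = w₀ ∨ succU u w w₀))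
    (hno : ∀ u w, (u, w) ∈ N → (u, f) ∈ E → ¬ succU u f w) :
    Good E succU succV N := by
  refine ⟨hsub, hmat, ?_⟩
  intro u w v huw hE hsucc
  by_cases hvim : v ∈ N.image Prod.snd
  · obtain ⟨⟨a, b⟩, hab, hb⟩ := Finset.mem_image.mp hvim
    have hb' : b = v := hb
    subst hb'
    exact ⟨a, hab, hiv u w b a huw hab hE hsucc⟩
  · by_cases hvf : v = f
    · subst hvf; exact absurd hsucc (hno u w huw hE)
    · exfalso
      have hvX : v ∉ X := by
        intro hvX
        exact hvim (hNim ▸ Finset.mem_erase.mpr ⟨hvf, hvX⟩)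
      obtain ⟨w₀, hw₀M, hc⟩ := hv u w huw
      have hsucc₀ : succU u v w₀ := by
        rcases hc with rfl | h
        · exact hsucc
        · exact hpref.2.1 u v w w₀ hsucc h
      obtain ⟨u', hu'M, -⟩ := hM.2.2 u w₀ v hw₀M hE hsucc₀
      exact hvX (hX ▸ Finset.mem_image_of_mem Prod.snd hu'M)

lemma chain {U V : Type*} [Fintype U] [Fintype V] (E : Finset (U × V))
    (succU : U → V → V → Prop) (succV : V → U → U → Prop)
    (hpref : ValidPrefs E succU succV)
    (M : Finset (U × V)) (hM : Good E succU succV M) (X : Finset V)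
    (hX : X = M.image Prod.snd) :
    ∀ n (N : Finset (U × V)) (f : V),
      chainMeasure E succU N ≤ n →
      N ⊆ E →
      (∀ e₁ ∈ N, ∀ e₂ ∈ N, (e₁.1 = e₂.1 ∨ e₁.2 = e₂.2) → e₁ = e₂) →
      f ∈ X →
      N.image Prod.snd = X.erase f →
      (∀ u w v u', (u, w) ∈ N → (u', v) ∈ N → (u, v) ∈ E → succU u v w → ¬ succV v u u') →
      (∀ u w, (u, w) ∈ N → ∃ w₀, (u, w₀) ∈ M ∧ (w = w₀ ∨ succU u w w₀)) →
      ∃ g ∈ X, ∃ N', Good E succU succV N' ∧ N'.image Prod.snd = X.erase g := by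
  intro n
  induction n with
  | zero =>
    intro N f hmeas hsub hmat hfX hNim hiv hv
    by_cases hadm : ∃ u w, (u, w) ∈ N ∧ (u, f) ∈ E ∧ succU u f w
    · exfalso
      obtain ⟨u₁, w₁, huw, hE₁, hs₁⟩ := hadm
      have h1 : 1 ≤ (Finset.univ.filter
          (fun v => ((u₁, w₁).1, v) ∈ E ∧ succU (u₁, w₁).1 v (u₁, w₁).2)).card := by
        refine Finset.card_pos.mpr ⟨f, ?_⟩
        simp only [Finset.mem_filter, Finset.mem_univ, true_and]
        exact ⟨hE₁, hs₁⟩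
      have h2 := Finset.single_le_sum
        (f := fun e : U × V =>
          (Finset.univ.filter (fun v => (e.1, v) ∈ E ∧ succU e.1 v e.2)).card)
        (fun i _ => Nat.zero_le _) huw
      have h3 : (1:ℕ) ≤ chainMeasure E succU N := le_trans h1 h2
      omega
    · push_neg at hadm
      exact ⟨f, hfX, N,
        chain_finish E succU succV hpref hM hX hsub hmat hNim hiv hv
          (fun u w h hE hs => hadm u w h hE hs), hNim⟩
  | succ n ih =>
    intro N f hmeas hsub hmat hfX hNim hiv hv
    by_cases hadm : ∃ u w, (u, w) ∈ N ∧ (u, f) ∈ E ∧ succU u f w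
    · -- pick the best admirer of `f`
      obtain ⟨u₁, w₁, huw₁, hE₁, hs₁⟩ := hadm
      set s : Finset U := Finset.univ.filter
        (fun u => (u, f) ∈ E ∧ ∃ w, (u, w) ∈ N ∧ succU u f w) with hs_def
      have hsne : s.Nonempty := ⟨u₁, by
        simp only [hs_def, Finset.mem_filter, Finset.mem_univ, true_and]
        exact ⟨hE₁, w₁, huw₁, hs₁⟩⟩
      obtain ⟨m, hm, hmax⟩ := exists_maximal_rel (succV f) (hpref.2.2.2.1 f)
        (fun a b c => hpref.2.2.2.2.1 f a b c) hsne
      have hm' := Finset.mem_filter.mp hm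
      obtain ⟨hmE, wm, hwmN, hms⟩ := hm'.2
      have hf_unm : f ∉ N.image Prod.snd := by
        rw [hNim]; exact Finset.notMem_erase f X
      have hwm_ne_f : wm ≠ f := by
        rintro rfl
        exact hf_unm (Finset.mem_image_of_mem Prod.snd hwmN)
      have hwmX : wm ∈ X := by
        have : wm ∈ N.image Prod.snd := Finset.mem_image_of_mem Prod.snd hwmN
        rw [hNim] at this
        exact (Finset.mem_erase.mp this).2
      have hmf_notN : (m, f) ∉ N := fun h => hf_unm (Finset.mem_image_of_mem Prod.snd h)
      set N' : Finset (U × V) := insert (m, f) (N.erase (m, wm)) with hN'_def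
      have key : ∀ a b, (a, b) ∈ N.erase (m, wm) → a ≠ m ∧ b ≠ f := by
        rintro a b hab
        obtain ⟨hne, habN⟩ := Finset.mem_erase.mp hab
        constructor
        · rintro rfl
          exact hne (by rw [matching_fst_eq hmat habN hwmN])
        · rintro rfl
          exact hf_unm (Finset.mem_image_of_mem Prod.snd habN)
      -- N' is a matching contained in E
      have hsub' : N' ⊆ E := by
        intro e he
        rcases Finset.mem_insert.mp he with rfl | he'
        · exact hmE
        · exact hsub (Finset.mem_of_mem_erase he')
      have hmat' : ∀ e₁ ∈ N', ∀ e₂ ∈ N', (e₁.1 = e₂.1 ∨ e₁.2 = e₂.2) → e₁ = e₂ := by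
        intro e₁ he₁ e₂ he₂ hsh
        rcases Finset.mem_insert.mp he₁ with rfl | h₁ <;>
          rcases Finset.mem_insert.mp he₂ with h₂ | h₂
        · rw [h₂]
        · obtain ⟨ha, hb⟩ := key e₂.1 e₂.2 (by simpa using h₂)
          rcases hsh with h | h
          · exact absurd h.symm ha
          · exact absurd h.symm hb
        · subst h₂
          obtain ⟨ha, hb⟩ := key e₁.1 e₁.2 (by simpa using h₁)
          rcases hsh with h | h
          · exact absurd h ha
          · exact absurd h hb
        · exact hmat e₁ (Finset.mem_of_mem_erase h₁) e₂ (Finset.mem_of_mem_erase h₂) hsh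
      -- the matched women of N'
      have him : N'.image Prod.snd = X.erase wm := by
        rw [hN'_def, Finset.image_insert, image_snd_erase hmat hwmN, hNim]
        ext y
        simp only [Finset.mem_insert, Finset.mem_erase]
        constructor
        · rintro (rfl | ⟨hyw, _, hyX⟩)
          · exact ⟨Ne.symm hwm_ne_f, hfX⟩
          · exact ⟨hyw, hyX⟩
        · rintro ⟨hyw, hyX⟩
          by_cases hyf : y = f
          · exact Or.inl hyf
          · exact Or.inr ⟨hyw, hyf, hyX⟩
      -- invariant (iv) for N'
      have hiv' : ∀ u w v u', (u, w) ∈ N' → (u', v) ∈ N' → (u, v) ∈ E →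
          succU u v w → ¬ succV v u u' := by
        intro u w v u' huw hu'v hE hsucc
        rcases Finset.mem_insert.mp huw with h₁ | h₁ <;>
          rcases Finset.mem_insert.mp hu'v with h₂ | h₂
        · obtain ⟨rfl, rfl⟩ : m = u ∧ f = w :=
            ⟨(congrArg Prod.fst h₁).symm, (congrArg Prod.snd h₁).symm⟩
          obtain ⟨rfl, rfl⟩ : m = u' ∧ f = v :=
            ⟨(congrArg Prod.fst h₂).symm, (congrArg Prod.snd h₂).symm⟩
          exact absurd hsucc (hpref.1 m f)
        · obtain ⟨rfl, rfl⟩ : m = u ∧ f = w :=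
            ⟨(congrArg Prod.fst h₁).symm, (congrArg Prod.snd h₁).symm⟩
          have : succU m v wm := hpref.2.1 m v f wm hsucc hms
          exact hiv m wm v u' hwmN (Finset.mem_of_mem_erase h₂) hE this
        · obtain ⟨rfl, rfl⟩ : m = u' ∧ f = v :=
            ⟨(congrArg Prod.fst h₂).symm, (congrArg Prod.snd h₂).symm⟩
          refine hmax u ?_
          simp only [hs_def, Finset.mem_filter, Finset.mem_univ, true_and]
          exact ⟨hE, w, Finset.mem_of_mem_erase h₁, hsucc⟩
        · exact hiv u w v u' (Finset.mem_of_mem_erase h₁) (Finset.mem_of_mem_erase h₂) hE hsucc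
      -- invariant (v) for N'
      have hv' : ∀ u w, (u, w) ∈ N' → ∃ w₀, (u, w₀) ∈ M ∧ (w = w₀ ∨ succU u w w₀) := by
        intro u w huw
        rcases Finset.mem_insert.mp huw with h₁ | h₁
        · obtain ⟨rfl, rfl⟩ : m = u ∧ f = w :=
            ⟨(congrArg Prod.fst h₁).symm, (congrArg Prod.snd h₁).symm⟩
          obtain ⟨w₀, hw₀M, hc⟩ := hv m wm hwmN
          refine ⟨w₀, hw₀M, Or.inr ?_⟩
          rcases hc with rfl | h
          · exact hms
          · exact hpref.2.1 m f wm w₀ hms h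
        · exact hv u w (Finset.mem_of_mem_erase h₁)
      -- the measure strictly decreases
      have hmeas' : chainMeasure E succU N' < chainMeasure E succU N := by
        have hnotin : (m, f) ∉ N.erase (m, wm) := fun h => hmf_notN (Finset.mem_of_mem_erase h)
        have e1 : chainMeasure E succU N' =
            (Finset.univ.filter (fun v => (m, v) ∈ E ∧ succU m v f)).card +
            chainMeasure E succU (N.erase (m, wm)) := by
          rw [hN'_def]
          exact Finset.sum_insert hnotin
        have e2 : chainMeasure E succU (N.erase (m, wm)) +
            (Finset.univ.filter (fun v => (m, v) ∈ E ∧ succU m v wm)).card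
            = chainMeasure E succU N := Finset.sum_erase_add N _ hwmN
        have hcard : (Finset.univ.filter (fun v => (m, v) ∈ E ∧ succU m v f)).card <
            (Finset.univ.filter (fun v => (m, v) ∈ E ∧ succU m v wm)).card := by
          refine Finset.card_lt_card ?_
          refine (Finset.ssubset_iff_of_subset ?_).mpr ⟨f, ?_, ?_⟩
          · intro y hy
            simp only [Finset.mem_filter, Finset.mem_univ, true_and] at hy ⊢
            exact ⟨hy.1, hpref.2.1 m y f wm hy.2 hms⟩
          · simp only [Finset.mem_filter, Finset.mem_univ, true_and]
            exact ⟨hmE, hms⟩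
          · simp only [Finset.mem_filter, Finset.mem_univ, true_and]
            rintro ⟨-, h⟩
            exact hpref.1 m f h
        omega
      exact ih N' wm (by omega) hsub' hmat' hwmX him hiv' hv'
    · push_neg at hadm
      exact ⟨f, hfX, N,
        chain_finish E succU succV hpref hM hX hsub hmat hNim hiv hv
          (fun u w h hE hs => hadm u w h hE hs), hNim⟩

lemma accessible_aux {U V : Type*} [Fintype U] [Fintype V] (E : Finset (U × V))
    (succU : U → V → V → Prop) (succV : V → U → U → Prop)
    (hpref : ValidPrefs E succU succV)
    (M : Finset (U × V)) (hM : Good E succU succV M)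
    (hne : M.image Prod.snd ≠ ∅) :
    ∃ g ∈ M.image Prod.snd, ∃ N', Good E succU succV N' ∧
      N'.image Prod.snd = (M.image Prod.snd).erase g := by
  obtain ⟨v₀, hv₀⟩ := Finset.nonempty_iff_ne_empty.mpr hne
  obtain ⟨⟨u₀, b⟩, habM, hb⟩ := Finset.mem_image.mp hv₀
  have hb' : b = v₀ := hb
  subst hb'
  refine chain E succU succV hpref M hM (M.image Prod.snd) rfl
    (chainMeasure E succU (M.erase (u₀, b))) (M.erase (u₀, b)) b le_rfl
    (fun e he => hM.1 (Finset.mem_of_mem_erase he))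
    (fun e₁ he₁ e₂ he₂ h => hM.2.1 e₁ (Finset.mem_of_mem_erase he₁) e₂
      (Finset.mem_of_mem_erase he₂) h)
    hv₀ (image_snd_erase hM.2.1 habM) ?_ ?_
  · intro u w v u' huw hu'v hE hsucc
    obtain ⟨u₁, hu₁M, hns⟩ := hM.2.2 u w v (Finset.mem_of_mem_erase huw) hE hsucc
    have : u' = u₁ := matching_snd_eq hM.2.1 (Finset.mem_of_mem_erase hu'v) hu₁M
    exact this ▸ hns
  · intro u w huw
    exact ⟨w, Finset.mem_of_mem_erase huw, Or.inl rfl⟩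

lemma good_union {U V : Type*} (E : Finset (U × V))
    (succU : U → V → V → Prop) (succV : V → U → U → Prop)
    (hpref : ValidPrefs E succU succV)
    {M₁ M₂ : Finset (U × V)} (h₁ : Good E succU succV M₁) (h₂ : Good E succU succV M₂) :
    ∃ J, Good E succU succV J ∧
      J.image Prod.snd = M₁.image Prod.snd ∪ M₂.image Prod.snd := by
  classical
  set J : Finset (U × V) :=
    M₁.filter (fun e => ∀ u₂, (u₂, e.2) ∈ M₂ → ¬ succV e.2 u₂ e.1) ∪
    M₂.filter (fun e => ∀ u₁, (u₁, e.2) ∈ M₁ → succV e.2 e.1 u₁) with hJ_def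
  have hJE : J ⊆ E := by
    intro e he
    rcases Finset.mem_union.mp he with h | h
    · exact h₁.1 (Finset.mem_filter.mp h).1
    · exact h₂.1 (Finset.mem_filter.mp h).1
  have hmemJ : ∀ u v, (u, v) ∈ J ↔
      ((u, v) ∈ M₁ ∧ ∀ u₂, (u₂, v) ∈ M₂ → ¬ succV v u₂ u) ∨
      ((u, v) ∈ M₂ ∧ ∀ u₁, (u₁, v) ∈ M₁ → succV v u u₁) := by
    intro u v
    simp only [hJ_def, Finset.mem_union, Finset.mem_filter]
  -- every vertex matched in M₁ or M₂ is matched in J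
  have cover : ∀ v, (∃ u, (u, v) ∈ M₁) ∨ (∃ u, (u, v) ∈ M₂) → ∃ u, (u, v) ∈ J := by
    intro v hv
    by_cases hv1 : ∃ u, (u, v) ∈ M₁
    · obtain ⟨u₁, hu₁⟩ := hv1
      by_cases hk : ∀ u₂, (u₂, v) ∈ M₂ → ¬ succV v u₂ u₁
      · exact ⟨u₁, (hmemJ u₁ v).mpr (Or.inl ⟨hu₁, hk⟩)⟩
      · push_neg at hk
        obtain ⟨u₂, hu₂, hs⟩ := hk
        refine ⟨u₂, (hmemJ u₂ v).mpr (Or.inr ⟨hu₂, ?_⟩)⟩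
        intro u₁' h
        have : u₁' = u₁ := matching_snd_eq h₁.2.1 h hu₁
        exact this ▸ hs
    · rcases hv with h | h
      · exact absurd h hv1
      · obtain ⟨u₂, hu₂⟩ := h
        refine ⟨u₂, (hmemJ u₂ v).mpr (Or.inr ⟨hu₂, ?_⟩)⟩
        intro u₁ h
        exact absurd ⟨u₁, h⟩ hv1
  -- the J-partner of v is weakly preferred (by v) to v's partners in M₁, M₂
  have dom : ∀ u v, (u, v) ∈ J →
      (∀ u₁, (u₁, v) ∈ M₁ → (u₁ = u ∨ succV v u u₁)) ∧
      (∀ u₂, (u₂, v) ∈ M₂ → (u₂ = u ∨ succV v u u₂)) := by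
    intro u v huv
    rcases (hmemJ u v).mp huv with ⟨hM, hk⟩ | ⟨hM, hk⟩
    · refine ⟨fun u₁ h => Or.inl (matching_snd_eq h₁.2.1 h hM), fun u₂ h => ?_⟩
      by_cases he : u₂ = u
      · exact Or.inl he
      · rcases hpref.2.2.2.2.2 v u u₂ (h₁.1 hM) (h₂.1 h) (Ne.symm he) with hs | hs
        · exact Or.inr hs
        · exact absurd hs (hk u₂ h)
    · exact ⟨fun u₁ h => Or.inr (hk u₁ h), fun u₂ h => Or.inl (matching_snd_eq h₂.2.1 h hM)⟩
  -- no two edges of J share the right endpoint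
  have vuniq : ∀ u u' v, (u, v) ∈ J → (u', v) ∈ J → u = u' := by
    intro u u' v huv hu'v
    rcases (hmemJ u v).mp huv with ⟨hM, hk⟩ | ⟨hM, hk⟩ <;>
      rcases (hmemJ u' v).mp hu'v with ⟨hM', hk'⟩ | ⟨hM', hk'⟩
    · exact matching_snd_eq h₁.2.1 hM hM'
    · exact absurd (hk' u hM) (hk u' hM')
    · exact absurd (hk u' hM') (hk' u hM)
    · exact matching_snd_eq h₂.2.1 hM hM'
  -- no two edges of J share the left endpoint
  have uuniq : ∀ u v v', (u, v) ∈ J → (u, v') ∈ J → v = v' := by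
    have main : ∀ v v' u, (u, v) ∈ M₁ → (∀ u₂, (u₂, v) ∈ M₂ → ¬ succV v u₂ u) →
        (u, v') ∈ M₂ → (∀ u₁, (u₁, v') ∈ M₁ → succV v' u u₁) → v = v' := by
      intro v v' u hM hk hM' hk'
      by_contra hne
      rcases hpref.2.2.1 u v v' (h₁.1 hM) (h₂.1 hM') hne with hs | hs
      · -- u prefers v (his M₁-partner) to v' (his M₂-partner)
        obtain ⟨u₂', hu₂', hns⟩ := h₂.2.2 u v' v hM' (h₁.1 hM) hs
        by_cases he : u = u₂'
        · exact hne (matching_fst_eq h₂.2.1 (he ▸ hu₂') hM')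
        · rcases hpref.2.2.2.2.2 v u u₂' (h₁.1 hM) (h₂.1 hu₂') he with h | h
          · exact hns h
          · exact hk u₂' hu₂' h
      · -- u prefers v' to v
        obtain ⟨u₁', hu₁', hns⟩ := h₁.2.2 u v v' hM (h₂.1 hM') hs
        exact hns (hk' u₁' hu₁')
    intro u v v' huv huv'
    rcases (hmemJ u v).mp huv with ⟨hM, hk⟩ | ⟨hM, hk⟩ <;>
      rcases (hmemJ u v').mp huv' with ⟨hM', hk'⟩ | ⟨hM', hk'⟩
    · exact matching_fst_eq h₁.2.1 hM hM'
    · exact main v v' u hM hk hM' hk'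
    · exact (main v' v u hM' hk' hM hk).symm
    · exact matching_fst_eq h₂.2.1 hM hM'
  refine ⟨J, ⟨hJE, ?_, ?_⟩, ?_⟩
  · rintro ⟨a, b⟩ he₁ ⟨c, d⟩ he₂ hsh
    rcases hsh with h | h
    · have h' : a = c := h
      subst h'
      have : b = d := uuniq a b d he₁ he₂
      rw [this]
    · have h' : b = d := h
      subst h'
      have : a = c := vuniq a c b he₁ he₂
      rw [this]
  · intro u w v huw hE hsucc
    have hw12 : (u, w) ∈ M₁ ∨ (u, w) ∈ M₂ := by
      rcases (hmemJ u w).mp huw with ⟨h, -⟩ | ⟨h, -⟩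
      · exact Or.inl h
      · exact Or.inr h
    -- v is matched in the corresponding Mᵢ to some uᵢ with ¬ succV v u uᵢ
    obtain ⟨ui, hui, hnsi, hdomi⟩ :
        ∃ ui, ¬ succV v u ui ∧ (∀ u', (u', v) ∈ J → (ui = u' ∨ succV v u' ui)) ∧
          ((∃ x, (x, v) ∈ M₁) ∨ (∃ x, (x, v) ∈ M₂)) := by
      rcases hw12 with h | h
      · obtain ⟨ui, huiM, hns⟩ := h₁.2.2 u w v h hE hsucc
        refine ⟨ui, hns, ?_, Or.inl ⟨ui, huiM⟩⟩
        intro u' hu'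
        exact (dom u' v hu').1 ui huiM
      · obtain ⟨ui, huiM, hns⟩ := h₂.2.2 u w v h hE hsucc
        refine ⟨ui, hns, ?_, Or.inr ⟨ui, huiM⟩⟩
        intro u' hu'
        exact (dom u' v hu').2 ui huiM
    obtain ⟨u', hu'J⟩ := cover v hdomi
    refine ⟨u', hu'J, ?_⟩
    intro hcon
    rcases hnsi u' hu'J with rfl | hs
    · exact hui hcon
    · exact hui (hpref.2.2.2.2.1 v u u' ui hcon hs)
  · ext y
    simp only [Finset.mem_image, Finset.mem_union]
    constructor
    · rintro ⟨⟨a, b⟩, hab, rfl⟩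
      rcases (hmemJ a b).mp hab with ⟨h, -⟩ | ⟨h, -⟩
      · exact Or.inl ⟨(a, b), h, rfl⟩
      · exact Or.inr ⟨(a, b), h, rfl⟩
    · rintro (⟨⟨a, b⟩, hab, rfl⟩ | ⟨⟨a, b⟩, hab, rfl⟩)
      · obtain ⟨u', hu'⟩ := cover b (Or.inl ⟨a, hab⟩)
        exact ⟨(u', b), hu', rfl⟩
      · obtain ⟨u', hu'⟩ := cover b (Or.inr ⟨a, hab⟩)
        exact ⟨(u', b), hu', rfl⟩

/-- The set system `(V, 𝓕)` with `𝓕 = { F(U') : U' ⊆ U }` induced by a stable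
matching instance is an antimatroid: `∅ ∈ 𝓕`, `𝓕` is accessible, and `𝓕` is
union-closed. -/
theorem stable_family_antimatroid {U V : Type*} [Fintype U] [Fintype V]
    (E : Finset (U × V)) (succU : U → V → V → Prop) (succV : V → U → U → Prop)
    (hpref : ValidPrefs E succU succV) :
    (∅ ∈ stableFamily E succU succV) ∧
    (∀ X ∈ stableFamily E succU succV, X ≠ ∅ →
      ∃ v ∈ X, X.erase v ∈ stableFamily E succU succV) ∧
    (∀ X ∈ stableFamily E succU succV, ∀ Y ∈ stableFamily E succU succV,
      X ∪ Y ∈ stableFamily E succU succV) := by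
  refine ⟨?_, ?_, ?_⟩
  · refine (mem_family_iff_good E succU succV ∅).mpr ⟨∅, ⟨?_, ?_, ?_⟩, by simp⟩
    · simp
    · intro e he; simp at he
    · intro u w v h; simp at h
  · intro X hX hne
    obtain ⟨M, hM, rfl⟩ := (mem_family_iff_good E succU succV X).mp hX
    obtain ⟨g, hg, N', hN', him⟩ := accessible_aux E succU succV hpref M hM hne
    exact ⟨g, hg, (mem_family_iff_good E succU succV _).mpr ⟨N', hN', him.symm⟩⟩
  · intro X hX Y hY
    obtain ⟨M₁, h₁, rfl⟩ := (mem_family_iff_good E succU succV X).mp hX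
    obtain ⟨M₂, h₂, rfl⟩ := (mem_family_iff_good E succU succV Y).mp hY
    obtain ⟨J, hJ, him⟩ := good_union E succU succV hpref h₁ h₂
    exact (mem_family_iff_good E succU succV _).mpr ⟨J, hJ, him.symm⟩
end

section
/- Let F : 2^U → 2^V be the map induced by a stable matching instance (G = (U,V;E), ≻), and let 𝓕 := { F(U') : U' ⊆ U }. Then 𝓕 is accessible: for every nonempty X ∈ 𝓕 there exists v ∈ X with X∖{v} ∈ 𝓕. -/
open scoped Classical

/-!
Delete a matched pair `(u₀, v₀)` from a stable matching `M` of a restricted instance and keep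
only the left vertices that are still matched. Every blocking pair of what remains involves the
vacant right vertex `v₀`. Now run a vacancy chain: the vacant vertex `w` takes the partner she
likes best among the left vertices that prefer her to their current partner, and that vertex's
former partner becomes the new vacancy. Each step moves a left vertex up its preference list, so
the chain stops, and it stops at a stable matching of the same restricted instance that matches
`X` minus one vertex.
-/

theorem Finset.exists_forall_not_rel_image {α β : Type*} (r : β → β → Prop) [IsStrictOrder β r]
    (f : α → β) {s : Finset α} (hs : s.Nonempty) : ∃ a ∈ s, ∀ b ∈ s, ¬ r (f b) (f a) := by
  obtain ⟨_, hmem, hmin⟩ :=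
    (Set.wellFoundedOn_iff.1 ((s.image f).wellFoundedOn (r := r))).has_min _ (hs.image f)
  obtain ⟨a, ha, rfl⟩ := Finset.mem_image.1 hmem
  exact ⟨a, ha, fun b hb h => hmin _ (Finset.mem_image_of_mem f hb)
    ⟨h, Finset.mem_image_of_mem f hb, hmem⟩⟩

open Finset

section StableMatching

variable {U V : Type*} {E E' M : Finset (U × V)} {succU : U → V → V → Prop}
  {succV : V → U → U → Prop} {u u₀ : U} {v v' v₀ w w' : V}

theorem mem_restrictL {U' : Finset U} {e : U × V} : e ∈ restrictL E U' ↔ e ∈ E ∧ e.1 ∈ U' :=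
  mem_filter

theorem ValidPrefs.isStrictOrder_left (h : ValidPrefs E succU succV) (u : U) :
    IsStrictOrder V (succU u) where
  irrefl := h.1 u
  trans := h.2.1 u

theorem ValidPrefs.isStrictOrder_right (h : ValidPrefs E succU succV) (v : V) :
    IsStrictOrder U (succV v) where
  irrefl := h.2.2.2.1 v
  trans := h.2.2.2.2.1 v

namespace IsMatching

theorem anti {M' : Finset (U × V)} (hM : IsMatching E M) (hsub : M' ⊆ M) (hE : M' ⊆ E') :
    IsMatching E' M' :=
  ⟨hE, fun e₁ h₁ e₂ h₂ => hM.2 e₁ (hsub h₁) e₂ (hsub h₂)⟩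

theorem eq_of_fst_eq (hM : IsMatching E M) {e₁ e₂ : U × V} (h₁ : e₁ ∈ M) (h₂ : e₂ ∈ M)
    (h : e₁.1 = e₂.1) : e₁ = e₂ :=
  hM.2 e₁ h₁ e₂ h₂ (Or.inl h)

theorem eq_of_snd_eq (hM : IsMatching E M) {e₁ e₂ : U × V} (h₁ : e₁ ∈ M) (h₂ : e₂ ∈ M)
    (h : e₁.2 = e₂.2) : e₁ = e₂ :=
  hM.2 e₁ h₁ e₂ h₂ (Or.inr h)

protected theorem insert (hM : IsMatching E M) {e : U × V} (he : e ∈ E)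
    (hfst : ∀ f ∈ M, f.1 ≠ e.1) (hsnd : ∀ f ∈ M, f.2 ≠ e.2) : IsMatching E (insert e M) := by
  refine ⟨insert_subset he hM.1, ?_⟩
  simp only [mem_insert]
  rintro e₁ (rfl | h₁) e₂ (rfl | h₂) h
  · rfl
  · exact h.elim (fun h => absurd h.symm (hfst _ h₂)) (fun h => absurd h.symm (hsnd _ h₂))
  · exact h.elim (fun h => absurd h (hfst _ h₁)) (fun h => absurd h (hsnd _ h₁))
  · exact hM.2 e₁ h₁ e₂ h₂ h

theorem image_snd_erase (hM : IsMatching E M) {e : U × V} (he : e ∈ M) :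
    (M.erase e).image Prod.snd = (M.image Prod.snd).erase e.2 := by
  ext v
  simp only [mem_image, mem_erase]
  constructor
  · rintro ⟨f, ⟨hfe, hf⟩, rfl⟩
    exact ⟨fun h => hfe (hM.eq_of_snd_eq hf he h), f, hf, rfl⟩
  · rintro ⟨hv, f, hf, rfl⟩
    exact ⟨f, ⟨fun h => hv (h ▸ rfl), hf⟩, rfl⟩

end IsMatching

theorem IsStable.isMatching (hM : IsStable E succU succV M) : IsMatching E M := hM.1

noncomputable def rematch (M : Finset (U × V)) (u : U) (v v' : V) : Finset (U × V) :=
  insert (u, v') (M.erase (u, v))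

theorem mem_rematch {e : U × V} : e ∈ rematch M u v v' ↔ e = (u, v') ∨ e ≠ (u, v) ∧ e ∈ M := by
  simp only [rematch, mem_insert, mem_erase]

theorem isMatching_rematch (hM : IsMatching E M) (he : (u, v) ∈ M) (hE : (u, v') ∈ E)
    (hv' : ∀ x, (x, v') ∉ M) : IsMatching E (rematch M u v v') :=
  (hM.anti (erase_subset _ _) ((erase_subset _ _).trans hM.1)).insert hE
    (fun f hf h => (mem_erase.1 hf).1 (hM.eq_of_fst_eq (mem_erase.1 hf).2 he h))
    (fun f hf h => hv' f.1 (by rw [← show f.2 = v' from h]; exact (mem_erase.1 hf).2))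

theorem IsMatching.image_snd_rematch (hM : IsMatching E M) (he : (u, v) ∈ M) :
    (rematch M u v v').image Prod.snd = insert v' ((M.image Prod.snd).erase v) := by
  rw [rematch, image_insert, hM.image_snd_erase he]

def CoversLeft (E M : Finset (U × V)) : Prop :=
  ∀ e ∈ E, ∃ v, (e.1, v) ∈ M

theorem coversLeft_rematch (hcov : CoversLeft E M) : CoversLeft E (rematch M u v v') := by
  intro e he
  obtain ⟨x, hx⟩ := hcov e he
  by_cases h : (e.1, x) = (u, v)
  · exact ⟨v', mem_rematch.2 (Or.inl (by rw [(Prod.mk.inj h).1]))⟩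
  · exact ⟨x, mem_rematch.2 (Or.inr ⟨h, hx⟩)⟩

theorem coversLeft_erase (M : Finset (U × V)) (u₀ : U) (v₀ : V) :
    CoversLeft (restrictL E ((M.image Prod.fst).erase u₀)) (M.erase (u₀, v₀)) := by
  intro e he
  obtain ⟨hne, hmem⟩ := mem_erase.1 (mem_restrictL.1 he).2
  obtain ⟨⟨x, y⟩, hxy, rfl⟩ := mem_image.1 hmem
  exact ⟨y, mem_erase.2 ⟨fun h => hne (Prod.mk.inj h).1, hxy⟩⟩

theorem IsBlocking.exists_of_coversLeft (hcov : CoversLeft E M)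
    (hb : IsBlocking E succU succV M u v) : ∃ v', (u, v') ∈ M ∧ succU u v v' := by
  obtain ⟨x, hx⟩ := hcov _ hb.1
  exact hb.2.1.resolve_left fun h => h x hx

def IsStableExcept (E : Finset (U × V)) (succU : U → V → V → Prop) (succV : V → U → U → Prop)
    (M : Finset (U × V)) (w : V) : Prop :=
  IsMatching E M ∧ ∀ u v, IsBlocking E succU succV M u v → v = w

theorem IsStable.isStableExcept_erase {U' : Finset U} (hM : IsStable (restrictL E U') succU succV M)
    (he : (u₀, v₀) ∈ M) :
    IsStableExcept (restrictL E ((M.image Prod.fst).erase u₀)) succU succV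
      (M.erase (u₀, v₀)) v₀ := by
  have hsub : restrictL E ((M.image Prod.fst).erase u₀) ⊆ restrictL E U' := fun e hx => by
    obtain ⟨heE, heU⟩ := mem_restrictL.1 hx
    obtain ⟨f, hf, hfe⟩ := mem_image.1 (mem_of_mem_erase heU)
    exact mem_restrictL.2 ⟨heE, hfe ▸ (mem_restrictL.1 (hM.isMatching.1 hf)).2⟩
  have hmatch : IsMatching (restrictL E ((M.image Prod.fst).erase u₀)) (M.erase (u₀, v₀)) := by
    refine hM.isMatching.anti (erase_subset _ _) fun e hx => ?_
    obtain ⟨hne, heM⟩ := mem_erase.1 hx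
    refine mem_restrictL.2
      ⟨(mem_restrictL.1 (hM.isMatching.1 heM)).1, mem_erase.2 ⟨fun h => ?_, ?_⟩⟩
    · exact hne (hM.isMatching.eq_of_fst_eq heM he h)
    · exact mem_image_of_mem _ heM
  refine ⟨hmatch, fun u v hb => by_contra fun hv => hM.2 u v ⟨hsub hb.1, ?_, ?_⟩⟩
  · obtain ⟨x, hx, hpref⟩ := hb.exists_of_coversLeft (coversLeft_erase M u₀ v₀)
    exact Or.inr ⟨x, mem_of_mem_erase hx, hpref⟩
  · have hsame : ∀ x, (x, v) ∈ M.erase (u₀, v₀) ↔ (x, v) ∈ M := by simp [hv]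
    simpa only [hsame] using hb.2.2

theorem IsStableExcept.isStable (hM : IsStableExcept E succU succV M w) (hcov : CoversLeft E M)
    (hno : ∀ e ∈ M, (e.1, w) ∈ E → ¬ succU e.1 w e.2) : IsStable E succU succV M := by
  refine ⟨hM.1, fun u v hb => ?_⟩
  obtain rfl := hM.2 u v hb
  obtain ⟨v', hv', hpref⟩ := hb.exists_of_coversLeft hcov
  exact hno _ hv' hb.1 hpref

theorem isStableExcept_rematch [∀ u, IsStrictOrder V (succU u)]
    (hM : IsStableExcept E succU succV M w) (hcov : CoversLeft E M) (hwM : ∀ x, (x, w) ∉ M)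
    (he : (u, w') ∈ M) (hE : (u, w) ∈ E) (hpref : succU u w w')
    (hbest : ∀ e ∈ M, (e.1, w) ∈ E → succU e.1 w e.2 → ¬ succV w e.1 u) :
    IsStableExcept E succU succV (rematch M u w' w) w' := by
  have hM' := isMatching_rematch hM.1 he hE hwM
  refine ⟨hM', fun x v hb => by_contra fun hvw' => ?_⟩
  -- `x` still prefers `v` to some partner in `M`: its old one if `x = u`, by transitivity.
  obtain ⟨y, hy, hxy⟩ : ∃ y, (x, y) ∈ M ∧ succU x v y := by
    obtain ⟨y, hy, hxy⟩ := hb.exists_of_coversLeft (coversLeft_rematch hcov)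
    rcases mem_rematch.1 hy with h | ⟨-, hy⟩
    · obtain ⟨rfl, rfl⟩ := Prod.mk.inj h
      exact ⟨w', he, _root_.trans hxy hpref⟩
    · exact ⟨y, hy, hxy⟩
  by_cases hvw : v = w
  · subst hvw
    obtain ⟨x', hx', hs⟩ := hb.2.2.resolve_left fun h => h u (mem_rematch.2 (Or.inl rfl))
    obtain rfl : x' = u := (Prod.mk.inj (hM'.eq_of_snd_eq hx' (mem_rematch.2 (Or.inl rfl)) rfl)).1
    exact hbest (x, y) hy hb.1 hxy hs
  · have hsame : ∀ x', (x', v) ∈ rematch M u w' w ↔ (x', v) ∈ M := by simp [mem_rematch, hvw, hvw']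
    exact hvw (hM.2 x v ⟨hb.1, Or.inr ⟨y, hy, hxy⟩, by simpa only [hsame] using hb.2.2⟩)

noncomputable def leftRegret (E : Finset (U × V)) (succU : U → V → V → Prop)
    (M : Finset (U × V)) : ℕ :=
  ∑ e ∈ M, (E.filter fun f => f.1 = e.1 ∧ succU e.1 f.2 e.2).card

theorem leftRegret_rematch_lt [∀ u, IsStrictOrder V (succU u)] (he : (u, v) ∈ M)
    (hv' : (u, v') ∉ M) (hE : (u, v') ∈ E) (hpref : succU u v' v) :
    leftRegret E succU (rematch M u v v') < leftRegret E succU M := by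
  have hlt : (E.filter fun f => f.1 = u ∧ succU u f.2 v').card
      < (E.filter fun f => f.1 = u ∧ succU u f.2 v).card := by
    refine card_lt_card ((ssubset_iff_of_subset ?_).2 ⟨(u, v'), ?_, ?_⟩)
    · intro f hf
      obtain ⟨hfE, h₁, h₂⟩ := mem_filter.1 hf
      exact mem_filter.2 ⟨hfE, h₁, _root_.trans h₂ hpref⟩
    · exact mem_filter.2 ⟨hE, rfl, hpref⟩
    · simp [irrefl]
  rw [leftRegret, leftRegret, rematch, sum_insert fun h => hv' (mem_of_mem_erase h),
    ← add_sum_erase M _ he]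
  exact Nat.add_lt_add_right hlt _

theorem IsStableExcept.exists_isStable [∀ u, IsStrictOrder V (succU u)]
    [∀ v, IsStrictOrder U (succV v)] {X : Finset V}
    (hM : IsStableExcept E succU succV M w) (hcov : CoversLeft E M) (hw : w ∈ X)
    (hX : M.image Prod.snd = X.erase w) :
    ∃ w' ∈ X, ∃ M', IsStable E succU succV M' ∧ M'.image Prod.snd = X.erase w' := by
  induction hn : leftRegret E succU M using Nat.strong_induction_on generalizing M w with
  | _ n ih =>
  have hwM : ∀ x, (x, w) ∉ M := fun x h => by simpa [hX] using mem_image_of_mem Prod.snd h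
  by_cases hC : ∃ e ∈ M, (e.1, w) ∈ E ∧ succU e.1 w e.2
  swap
  · push Not at hC
    exact ⟨w, hw, M, hM.isStable hcov hC, hX⟩
  obtain ⟨⟨u, w'⟩, hcand, hbest⟩ := exists_forall_not_rel_image (succV w) Prod.fst
    (s := M.filter fun e => (e.1, w) ∈ E ∧ succU e.1 w e.2)
    (by simpa [filter_nonempty_iff] using hC)
  obtain ⟨he, hE, hpref⟩ := mem_filter.1 hcand
  have hw' : w' ∈ X := (mem_erase.1 (hX ▸ mem_image_of_mem Prod.snd he)).2
  have hww' : w ≠ w' := fun h => hwM u (h ▸ he)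
  refine ih _ (hn ▸ leftRegret_rematch_lt he (hwM u) hE hpref) ?_ (coversLeft_rematch hcov) hw'
    ?_ rfl
  · exact isStableExcept_rematch hM hcov hwM he hE hpref
      fun e hx hxE hxw => hbest e (mem_filter.2 ⟨hx, hxE, hxw⟩)
  · rw [hM.1.image_snd_rematch he, hX, erase_right_comm, insert_erase (mem_erase.2 ⟨hww', hw⟩)]

end StableMatching

theorem stable_family_accessible_general {U V : Type*}
    (E : Finset (U × V)) (succU : U → V → V → Prop) (succV : V → U → U → Prop)
    (hpref : ValidPrefs E succU succV) :
    ∀ X ∈ stableFamily E succU succV, X ≠ ∅ →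
      ∃ v ∈ X, X.erase v ∈ stableFamily E succU succV := by
  have := hpref.isStrictOrder_left
  have := hpref.isStrictOrder_right
  rintro X ⟨U', M, hM, rfl⟩ hX
  obtain ⟨v₀, hv₀⟩ := nonempty_iff_ne_empty.2 hX
  obtain ⟨⟨u₀, v₀⟩, he, rfl⟩ := mem_image.1 hv₀
  obtain ⟨w, hw, M', hM', hM'X⟩ := (hM.isStableExcept_erase he).exists_isStable
    (coversLeft_erase M u₀ v₀) hv₀ (hM.isMatching.image_snd_erase he)
  exact ⟨w, hw, _, M', hM', hM'X.symm⟩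

/-- The family `𝓕 = { F(U') : U' ⊆ U }` induced by a stable matching instance
is accessible: every nonempty `X ∈ 𝓕` contains `v` with `X ∖ {v} ∈ 𝓕`. -/
theorem stable_family_accessible {U V : Type*} [Fintype U] [Fintype V]
    (E : Finset (U × V)) (succU : U → V → V → Prop) (succV : V → U → U → Prop)
    (hpref : ValidPrefs E succU succV) :
    ∀ X ∈ stableFamily E succU succV, X ≠ ∅ →
      ∃ v ∈ X, X.erase v ∈ stableFamily E succU succV :=
  stable_family_accessible_general E succU succV hpref
end

section
/- Let F : 2^U → 2^V be the map induced by a stable matching instance (G = (U,V;E), ≻), and let 𝓕 := { F(U') : U' ⊆ U }. Then 𝓕 is union-closed: for all U₁, U₂ ⊆ U there exists U* ⊆ U₁ ∪ U₂ such that F(U*) = F(U₁) ∪ F(U₂); in particular F(U₁) ∪ F(U₂) ∈ 𝓕. -/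
open scoped Classical

/-- The family `𝓕 = { F(U') : U' ⊆ U }` induced by a stable matching instance
is union-closed: for all `U₁, U₂ ⊆ U` there exists `U* ⊆ U₁ ∪ U₂` with
`F(U*) = F(U₁) ∪ F(U₂)`; in particular `F(U₁) ∪ F(U₂) ∈ 𝓕`. -/
theorem stable_family_union_closed {U V : Type*} [Fintype U] [Fintype V]
    (E : Finset (U × V)) (succU : U → V → V → Prop) (succV : V → U → U → Prop)
    (hpref : ValidPrefs E succU succV) :
    ∀ (U₁ U₂ : Finset U) (M₁ M₂ : Finset (U × V)),
      IsStable (restrictL E U₁) succU succV M₁ →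
      IsStable (restrictL E U₂) succU succV M₂ →
      (∃ Ustar : Finset U, Ustar ⊆ U₁ ∪ U₂ ∧
        ∃ Mstar : Finset (U × V),
          IsStable (restrictL E Ustar) succU succV Mstar ∧
          Mstar.image Prod.snd = M₁.image Prod.snd ∪ M₂.image Prod.snd) ∧
      (M₁.image Prod.snd ∪ M₂.image Prod.snd) ∈ stableFamily E succU succV := by
  classical
  obtain ⟨irrU, trU, totU, irrV, trV, totV⟩ := hpref
  have asymV : ∀ v a b, succV v a b → succV v b a → False :=
    fun v a b h h' => irrV v a (trV v a b a h h')
  intro U₁ U₂ M₁ M₂ h₁ h₂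
  -- basic membership facts
  have hE1 : ∀ e ∈ M₁, e ∈ E ∧ e.1 ∈ U₁ := by
    intro e he
    have := h₁.1.1 he
    simpa [restrictL, Finset.mem_filter] using this
  have hE2 : ∀ e ∈ M₂, e ∈ E ∧ e.1 ∈ U₂ := by
    intro e he
    have := h₂.1.1 he
    simpa [restrictL, Finset.mem_filter] using this
  set Mu : Finset (U × V) := M₁ ∪ M₂ with hMu
  have hMuE : ∀ e ∈ Mu, e ∈ E := by
    intro e he
    rcases Finset.mem_union.mp he with h | h
    · exact (hE1 e h).1
    · exact (hE2 e h).1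
  set Mstar : Finset (U × V) :=
    Mu.filter (fun e => ∀ w, (w, e.2) ∈ Mu → w = e.1 ∨ succV e.2 e.1 w) with hMstarDef
  have hMem : ∀ u v, (u, v) ∈ Mstar ↔
      ((u, v) ∈ Mu ∧ ∀ w, (w, v) ∈ Mu → w = u ∨ succV v u w) := by
    intro u v
    simp [hMstarDef, Finset.mem_filter]
  -- coverage: every right vertex covered by Mu is covered by Mstar
  have hcov : ∀ v, (∃ w, (w, v) ∈ Mu) → ∃ w, (w, v) ∈ Mstar := by
    intro v ⟨w, hw⟩
    by_cases h1 : ∃ a, (a, v) ∈ M₁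
    · obtain ⟨a, ha⟩ := h1
      by_cases h2 : ∃ b, (b, v) ∈ M₂
      · obtain ⟨b, hb⟩ := h2
        have key : ∀ c, succV v c a ∨ c = a → succV v c b ∨ c = b →
            ∃ w, (w, v) ∈ Mstar ∧ w = c → True := fun _ _ _ => ⟨w, by simp⟩
        -- choose the better of a, b
        by_cases hab : a = b
        · refine ⟨a, (hMem a v).mpr ⟨Finset.mem_union_left _ ha, ?_⟩⟩
          intro w' hw'
          rcases Finset.mem_union.mp hw' with h | h
          · exact Or.inl (congrArg Prod.fst (h₁.1.2 _ h _ ha (Or.inr rfl)))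
          · exact Or.inl (by
              have := congrArg Prod.fst (h₂.1.2 _ h _ hb (Or.inr rfl))
              simpa [hab] using this)
        · rcases totV v a b (hE1 _ ha).1 (hE2 _ hb).1 hab with hp | hp
          · refine ⟨a, (hMem a v).mpr ⟨Finset.mem_union_left _ ha, ?_⟩⟩
            intro w' hw'
            rcases Finset.mem_union.mp hw' with h | h
            · exact Or.inl (congrArg Prod.fst (h₁.1.2 _ h _ ha (Or.inr rfl)))
            · have : w' = b := congrArg Prod.fst (h₂.1.2 _ h _ hb (Or.inr rfl))
              exact Or.inr (this ▸ hp)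
          · refine ⟨b, (hMem b v).mpr ⟨Finset.mem_union_right _ hb, ?_⟩⟩
            intro w' hw'
            rcases Finset.mem_union.mp hw' with h | h
            · have : w' = a := congrArg Prod.fst (h₁.1.2 _ h _ ha (Or.inr rfl))
              exact Or.inr (this ▸ hp)
            · exact Or.inl (congrArg Prod.fst (h₂.1.2 _ h _ hb (Or.inr rfl)))
      · refine ⟨a, (hMem a v).mpr ⟨Finset.mem_union_left _ ha, ?_⟩⟩
        intro w' hw'
        rcases Finset.mem_union.mp hw' with h | h
        · exact Or.inl (congrArg Prod.fst (h₁.1.2 _ h _ ha (Or.inr rfl)))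
        · exact absurd ⟨w', h⟩ h2
    · have h2 : (w, v) ∈ M₂ := by
        rcases Finset.mem_union.mp hw with h | h
        · exact absurd ⟨w, h⟩ h1
        · exact h
      refine ⟨w, (hMem w v).mpr ⟨hw, ?_⟩⟩
      intro w' hw'
      rcases Finset.mem_union.mp hw' with h | h
      · exact absurd ⟨w', h⟩ h1
      · exact Or.inl (congrArg Prod.fst (h₂.1.2 _ h _ h2 (Or.inr rfl)))
  -- no two edges of Mstar share a right endpoint
  have huniqV : ∀ a b v, (a, v) ∈ Mstar → (b, v) ∈ Mstar → a = b := by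
    intro a b v ha hb
    obtain ⟨haMu, hca⟩ := (hMem a v).mp ha
    obtain ⟨hbMu, hcb⟩ := (hMem b v).mp hb
    rcases hca b hbMu with h | h
    · exact h.symm
    · rcases hcb a haMu with h' | h'
      · exact h'
      · exact absurd h (fun hh => asymV v a b hh h')
  -- the key "no blocking pair" helper
  have no_block : ∀ (U' : Finset U) (M : Finset (U × V)),
      IsStable (restrictL E U') succU succV M →
      ∀ u v v', (u, v) ∈ E → (u, v') ∈ M → succU u v v' →
      (∀ w, (w, v) ∈ M → w ≠ u → succV v u w) → False := by
    intro U' M hM u v v' hEuv hv' hp hthird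
    have hu : u ∈ U' := by
      have h0 := hM.1.1 hv'
      simp only [restrictL, Finset.mem_filter] at h0
      exact h0.2
    refine hM.2 u v ⟨by simp [restrictL, Finset.mem_filter, hEuv, hu],
      Or.inr ⟨v', hv', hp⟩, ?_⟩
    by_cases h : ∃ w, (w, v) ∈ M
    · obtain ⟨w, hw⟩ := h
      by_cases hwu : w = u
      · rw [hwu] at hw
        have hvv : v = v' := congrArg Prod.snd (hM.1.2 _ hw _ hv' (Or.inl rfl))
        exact absurd (hvv ▸ hp) (irrU u v')
      · exact Or.inr ⟨w, hw, hthird w hw hwu⟩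
    · exact Or.inl (fun u' h' => h ⟨u', h'⟩)
  -- no two edges of Mstar share a left endpoint
  have key : ∀ (A B : Finset U) (MA MB : Finset (U × V)),
      IsStable (restrictL E A) succU succV MA →
      IsStable (restrictL E B) succU succV MB →
      (∀ e ∈ MA, e ∈ E) → (∀ e ∈ MB, e ∈ E) → MA ⊆ Mu → MB ⊆ Mu →
      ∀ u v v', (u, v) ∈ MA → (u, v') ∈ MB →
      (∀ w, (w, v) ∈ Mu → w = u ∨ succV v u w) →
      (∀ w, (w, v') ∈ Mu → w = u ∨ succV v' u w) →
      (u, v) ∈ Mu → (u, v') ∈ Mu → v ≠ v' → False := by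
    intro A B MA MB hA hB hAE hBE hAsub hBsub u v v' hvA hv'B hcv hcv' hvMu hv'Mu hne
    rcases totU u v v' (hAE _ hvA) (hBE _ hv'B) hne with hp | hp
    · -- u prefers v; (u, v) blocks MB
      refine no_block B MB hB u v v' (hAE _ hvA) hv'B hp ?_
      intro w hw hwu
      rcases hcv w (hBsub hw) with h | h
      · exact absurd h hwu
      · exact h
    · -- u prefers v'; (u, v') blocks MA
      refine no_block A MA hA u v' v (hBE _ hv'B) hvA hp ?_
      intro w hw hwu
      rcases hcv' w (hAsub hw) with h | h
      · exact absurd h hwu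
      · exact h
  have huniqU : ∀ u v v', (u, v) ∈ Mstar → (u, v') ∈ Mstar → v = v' := by
    intro u v v' hv hv'
    by_contra hne
    obtain ⟨hvMu, hcv⟩ := (hMem u v).mp hv
    obtain ⟨hv'Mu, hcv'⟩ := (hMem u v').mp hv'
    rcases Finset.mem_union.mp hvMu with h | h <;>
      rcases Finset.mem_union.mp hv'Mu with h' | h'
    · exact hne (congrArg Prod.snd (h₁.1.2 _ h _ h' (Or.inl rfl)))
    · exact key U₁ U₂ M₁ M₂ h₁ h₂ (fun e he => (hE1 e he).1) (fun e he => (hE2 e he).1) Finset.subset_union_left Finset.subset_union_right u v v' h h' hcv hcv' hvMu hv'Mu hne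
    · exact key U₂ U₁ M₂ M₁ h₂ h₁ (fun e he => (hE2 e he).1) (fun e he => (hE1 e he).1) Finset.subset_union_right Finset.subset_union_left u v v' h h' hcv hcv' hvMu hv'Mu hne
    · exact hne (congrArg Prod.snd (h₂.1.2 _ h _ h' (Or.inl rfl)))
  set Ustar : Finset U := Mstar.image Prod.fst with hUstarDef
  -- Mstar is a matching of the restriction to Ustar
  have hmatch : IsMatching (restrictL E Ustar) Mstar := by
    constructor
    · intro e he
      have heMu : e ∈ Mu := (Finset.mem_filter.mp he).1
      simp only [restrictL, Finset.mem_filter]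
      exact ⟨hMuE e heMu, Finset.mem_image.mpr ⟨e, he, rfl⟩⟩
    · rintro ⟨a, x⟩ h1 ⟨b, y⟩ h2 (h | h)
      · simp only at h
        subst h
        have := huniqU a x y h1 h2
        simp [this]
      · simp only at h
        subst h
        have := huniqV a b x h1 h2
        simp [this]
  -- Mstar is stable
  have hstable : IsStable (restrictL E Ustar) succU succV Mstar := by
    refine ⟨hmatch, ?_⟩
    intro u v hb
    obtain ⟨hmem, hsecond, hthird⟩ := hb
    have hmem' : (u, v) ∈ E ∧ u ∈ Ustar := by
      simpa [restrictL, Finset.mem_filter] using hmem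
    obtain ⟨v₀, hv₀⟩ : ∃ v₀, (u, v₀) ∈ Mstar := by
      obtain ⟨e, he, hef⟩ := Finset.mem_image.mp hmem'.2
      exact ⟨e.2, by rwa [show ((u : U), e.2) = e from Prod.ext hef.symm rfl]⟩
    rcases hsecond with h | ⟨v', hv', hp⟩
    · exact h v₀ hv₀
    -- (u, v') ∈ Mstar and u prefers v to v'
    have hv'Mu : (u, v') ∈ Mu := ((hMem u v').mp hv').1
    have hthirdM : ∀ (M : Finset (U × V)), M ⊆ Mu →
        ∀ w, (w, v) ∈ M → w ≠ u → succV v u w := by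
      intro M hMsub w hw hwu
      obtain ⟨ws, hws⟩ := hcov v ⟨w, hMsub hw⟩
      rcases hthird with h | ⟨us, hus, hsV⟩
      · exact absurd hws (h ws)
      · obtain ⟨_, hcus⟩ := (hMem us v).mp hus
        rcases hcus w (hMsub hw) with h' | h'
        · exact h' ▸ hsV
        · exact trV v u us w hsV h'
    rcases Finset.mem_union.mp hv'Mu with h | h
    · exact no_block U₁ M₁ h₁ u v v' hmem'.1 h hp
        (hthirdM M₁ (Finset.subset_union_left) )
    · exact no_block U₂ M₂ h₂ u v v' hmem'.1 h hp
        (hthirdM M₂ (Finset.subset_union_right))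
  -- image equality
  have himage : Mstar.image Prod.snd = M₁.image Prod.snd ∪ M₂.image Prod.snd := by
    ext v
    simp only [Finset.mem_image, Finset.mem_union]
    constructor
    · rintro ⟨⟨w, x⟩, he, rfl⟩
      have : (w, x) ∈ Mu := ((hMem w x).mp he).1
      rcases Finset.mem_union.mp this with h | h
      · exact Or.inl ⟨(w, x), h, rfl⟩
      · exact Or.inr ⟨(w, x), h, rfl⟩
    · rintro (⟨⟨w, x⟩, he, rfl⟩ | ⟨⟨w, x⟩, he, rfl⟩)
      · obtain ⟨w', hw'⟩ := hcov x ⟨w, Finset.mem_union_left _ he⟩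
        exact ⟨(w', x), hw', rfl⟩
      · obtain ⟨w', hw'⟩ := hcov x ⟨w, Finset.mem_union_right _ he⟩
        exact ⟨(w', x), hw', rfl⟩
  have hUsub : Ustar ⊆ U₁ ∪ U₂ := by
    intro u hu
    obtain ⟨e, he, hef⟩ := Finset.mem_image.mp hu
    have : e ∈ Mu := (Finset.mem_filter.mp he).1
    rcases Finset.mem_union.mp this with h | h
    · exact Finset.mem_union_left _ (hef ▸ (hE1 e h).2)
    · exact Finset.mem_union_right _ (hef ▸ (hE2 e h).2)
  refine ⟨⟨Ustar, hUsub, Mstar, hstable, himage⟩, ?_⟩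
  exact ⟨Ustar, Mstar, hstable, himage.symm⟩
end
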